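/- arXiv:2312.14695 — 4 statements merged into one kernel-verified Lean document; each statement's English description precedes it below -/
import Mathlib

section
/- Let S_x be an N×N matrix depending polynomially on a complex parameter x, such that det(S_x) vanishes at x=0 to order exactly d = dim Ker(S_0). Then the limits A = lim_{x→0} (S_x/x) restricted to Ker(S_0) and B = lim_{x→0} x·S_x^{-1} both exist; moreover Ran(A) is a complement of Ran(S_0), Ker(B) = Ran(S_0), Ran(B) = Ker(S_0), B∘A is the identity on Ker(S_0), and A∘B is the projection with image Ran(A) and kernel Ran(S_0). -/
/-!
By the Smith normal form over `ℂ[X]`, `p = U * diagonal (X ^ k i * b i) * V` with `U`, `V`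
unimodular and `b i` not vanishing at `0`. Then `dim Ker S₀ = #{i | k i ≠ 0}`, while `det p`
vanishes to order `∑ i, k i`; so the hypothesis forces `k i ≤ 1` for all `i`. Consequently
`x • S_x⁻¹ = W_x⁻¹ * diagonal (x ^ (1 - k i)) * U_x⁻¹` (with `W = diagonal b * V`) extends
continuously to a family `R x` with `S_x * R_x = R_x * S_x = x • 1` near `0`. With `B = R 0`
and `A = S'(0)` on `Ker S₀`, passing to the limit gives `S₀ * B = B * S₀ = 0` and `B ∘ A = id`,
and everything else follows from these three identities by linear algebra.
-/

open Matrix Polynomial Filter Topology Finset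

theorem Matrix.exists_eq_mul_diagonal_mul_of_det_ne_zero {R ι : Type*} [CommRing R] [IsDomain R]
    [IsPrincipalIdealRing R] [Fintype ι] [DecidableEq ι] (p : Matrix ι ι R) (hp : p.det ≠ 0) :
    ∃ (U V : Matrix ι ι R) (a : ι → R), IsUnit U.det ∧ IsUnit V.det ∧ p = U * diagonal a * V := by
  have hinj : Function.Injective p.mulVecLin :=
    mulVec_injective_of_det_mem_nonZeroDivisors (mem_nonZeroDivisors_of_ne_zero hp)
  let e := LinearEquiv.ofInjective p.mulVecLin hinj
  obtain ⟨b, a, c, hc⟩ := (LinearMap.range p.mulVecLin).exists_smith_normal_form_of_rank_eq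
    (Pi.basisFun R ι) (LinearMap.finrank_range_of_inj hinj)
  let std := Pi.basisFun R ι
  -- `p` sends column `j` of `std.toMatrix (c.map e.symm)` to `c j = a j • b j`
  have hcol : p * std.toMatrix (c.map e.symm) = std.toMatrix b * diagonal a := by
    ext i j
    have h : p *ᵥ e.symm (c j) = c j := congrArg Subtype.val (e.apply_symm_apply (c j))
    rw [mul_diagonal]
    simpa [std, mul_apply, mulVec, dotProduct, Module.Basis.toMatrix_apply, hc, mul_comm]
      using congrFun h i
  refine ⟨std.toMatrix b, (c.map e.symm).toMatrix std, a,
    isUnit_det_of_right_inverse (std.toMatrix_mul_toMatrix_flip b),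
    isUnit_det_of_right_inverse ((c.map e.symm).toMatrix_mul_toMatrix_flip std), ?_⟩
  rw [← hcol, mul_assoc, Module.Basis.toMatrix_mul_toMatrix_flip, mul_one]

section LocalSmithForm

variable {K ι : Type*} [Field K] [Fintype ι] [DecidableEq ι]

theorem Matrix.det_map_eval (M : Matrix ι ι K[X]) (x : K) :
    (M.map (eval x)).det = M.det.eval x := by
  rw [← coe_evalRingHom, ← RingHom.mapMatrix_apply, ← RingHom.map_det]

theorem Matrix.exists_eq_mul_diagonal_X_pow_mul (p : Matrix ι ι K[X]) (hp : p.det ≠ 0) :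
    ∃ (U W : Matrix ι ι K[X]) (k : ι → ℕ), (U.map (eval 0)).det ≠ 0 ∧
      (W.map (eval 0)).det ≠ 0 ∧ p = U * diagonal (fun i => X ^ k i) * W := by
  obtain ⟨U, V, a, hU, hV, rfl⟩ := p.exists_eq_mul_diagonal_mul_of_det_ne_zero hp
  have ha : ∀ i, a i ≠ 0 := fun i hi =>
    hp (by rw [det_mul, det_mul, det_diagonal, prod_eq_zero (mem_univ i) hi, mul_zero, zero_mul])
  choose b hab hb using fun i => exists_eq_pow_rootMultiplicity_mul_and_not_dvd (a i) (ha i) 0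
  have hb0 : ∀ i, (b i).eval 0 ≠ 0 := fun i => by
    simpa [X_dvd_iff, coeff_zero_eq_eval_zero] using hb i
  refine ⟨U, diagonal b * V, fun i => rootMultiplicity 0 (a i), ?_, ?_, ?_⟩
  · rw [det_map_eval]
    exact (hU.map (evalRingHom 0)).ne_zero
  · rw [det_map_eval, det_mul, det_diagonal, eval_mul, eval_prod]
    exact mul_ne_zero (Finset.prod_ne_zero_iff.2 fun i _ => hb0 i)
      (hV.map (evalRingHom 0)).ne_zero
  · have hdiag : diagonal a = diagonal (fun i => X ^ rootMultiplicity 0 (a i)) * diagonal b := by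
      rw [diagonal_mul_diagonal]
      congr 1
      funext i
      simpa using hab i
    simp only [hdiag, mul_assoc]

theorem Matrix.rootMultiplicity_det_mul_diagonal_X_pow_mul (U W : Matrix ι ι K[X]) (k : ι → ℕ)
    (hU : (U.map (eval 0)).det ≠ 0) (hW : (W.map (eval 0)).det ≠ 0) :
    rootMultiplicity 0 (U * diagonal (fun i => X ^ k i) * W).det = ∑ i, k i := by
  rw [det_map_eval] at hU hW
  have hUW : U.det * W.det ≠ 0 :=
    mul_ne_zero (fun h => hU (by rw [h, eval_zero])) (fun h => hW (by rw [h, eval_zero]))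
  rw [det_mul, det_mul, det_diagonal, Finset.prod_pow_eq_pow_sum, mul_right_comm,
    rootMultiplicity_mul (mul_ne_zero hUW (pow_ne_zero _ X_ne_zero)), rootMultiplicity_mul hUW,
    rootMultiplicity_eq_zero hU, rootMultiplicity_eq_zero hW]
  simpa using rootMultiplicity_X_sub_C_pow (0 : K) (∑ i, k i)

theorem Matrix.finrank_ker_mul_diagonal_mul [DecidableEq K] (U V : Matrix ι ι K) (w : ι → K)
    (hU : U.det ≠ 0) (hV : V.det ≠ 0) :
    Module.finrank K (LinearMap.ker (U * diagonal w * V).mulVecLin) = #{i | w i = 0} := by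
  have h := LinearMap.finrank_range_add_finrank_ker (U * diagonal w * V).mulVecLin
  rw [← rank, rank_mul_eq_left_of_isUnit_det _ _ (isUnit_iff_ne_zero.2 hV),
    rank_mul_eq_right_of_isUnit_det _ _ (isUnit_iff_ne_zero.2 hU), rank_diagonal,
    Module.finrank_fintype_fun_eq_card, Fintype.card_subtype] at h
  have := card_filter_add_card_filter_not (s := univ) (fun i => w i = 0)
  simp only [card_univ, ← ne_eq] at this
  omega

theorem Matrix.map_eval_mul_diagonal_X_pow_mul (U W : Matrix ι ι K[X]) (k : ι → ℕ) (x : K) :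
    (U * diagonal (fun i => X ^ k i) * W).map (eval x)
      = U.map (eval x) * diagonal (fun i => x ^ k i) * W.map (eval x) := by
  rw [← coe_evalRingHom, Matrix.map_mul, Matrix.map_mul, diagonal_map (map_zero _)]
  simp

theorem Matrix.finrank_ker_map_eval_zero_mul_diagonal_X_pow_mul (U W : Matrix ι ι K[X])
    (k : ι → ℕ) (hU : (U.map (eval 0)).det ≠ 0) (hW : (W.map (eval 0)).det ≠ 0) :
    Module.finrank K (LinearMap.ker ((U * diagonal (fun i => X ^ k i) * W).map (eval 0)).mulVecLin)
      = #{i | k i ≠ 0} := by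
  classical
  rw [map_eval_mul_diagonal_X_pow_mul, finrank_ker_mul_diagonal_mul _ _ _ hU hW]
  simp

end LocalSmithForm

theorem Filter.Tendsto.matrix_mulVec {α m n R : Type*} [Fintype n] [NonUnitalNonAssocSemiring R]
    [TopologicalSpace R] [IsTopologicalSemiring R] {l : Filter α} {N : α → Matrix m n R}
    {u : α → n → R} {A : Matrix m n R} {w : n → R} (hN : Tendsto N l (𝓝 A))
    (hu : Tendsto u l (𝓝 w)) : Tendsto (fun x => N x *ᵥ u x) l (𝓝 (A *ᵥ w)) := by
  have hcont : Continuous fun q : Matrix m n R × (n → R) => q.1 *ᵥ q.2 :=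
    Continuous.matrix_mulVec continuous_fst continuous_snd
  have hpair := hN.prodMk_nhds hu
  exact (hcont.tendsto (A, w)).comp hpair

section Analytic

variable {𝕜 ι : Type*} [NontriviallyNormedField 𝕜] [Fintype ι]

theorem Matrix.tendsto_inv_smul_map_eval_mulVec (p : Matrix ι ι 𝕜[X]) {v : ι → 𝕜}
    (hv : p.map (eval 0) *ᵥ v = 0) :
    Tendsto (fun x => x⁻¹ • (p.map (eval x) *ᵥ v)) (𝓝[≠] 0)
      (𝓝 (p.map (fun f => f.derivative.eval 0) *ᵥ v)) := by
  have hd : HasDerivAt (fun x => p.map (eval x) *ᵥ v)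
      (p.map (fun f => f.derivative.eval 0) *ᵥ v) 0 :=
    hasDerivAt_pi.2 fun i => HasDerivAt.fun_sum fun j _ => ((p i j).hasDerivAt 0).mul_const (v j)
  simpa [hv] using hasDerivAt_iff_tendsto_slope_zero.1 hd

variable [DecidableEq ι]

theorem ContinuousAt.matrix_inv_of_det_ne_zero {M : 𝕜 → Matrix ι ι 𝕜} {a : 𝕜}
    (hM : ContinuousAt M a) (ha : (M a).det ≠ 0) : ContinuousAt (fun x => (M x)⁻¹) a :=
  (continuousAt_matrix_inv _ (by rw [Ring.inverse_eq_inv']; exact continuousAt_inv₀ ha)).comp hM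

theorem exists_continuousAt_mul_eq_smul_one_of_le_one {U W : 𝕜 → Matrix ι ι 𝕜}
    (hU : ContinuousAt U 0) (hW : ContinuousAt W 0) (hU0 : (U 0).det ≠ 0) (hW0 : (W 0).det ≠ 0)
    {k : ι → ℕ} (hk : ∀ i, k i ≤ 1) :
    ∃ N : 𝕜 → Matrix ι ι 𝕜, ContinuousAt N 0 ∧ ∀ᶠ x in 𝓝 0,
      U x * diagonal (fun i => x ^ k i) * W x * N x = x • 1 ∧
      N x * (U x * diagonal (fun i => x ^ k i) * W x) = x • 1 := by
  have hD : ∀ x : 𝕜, diagonal (fun i => x ^ k i) * diagonal (fun i => x ^ (1 - k i)) = x • 1 ∧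
      diagonal (fun i => x ^ (1 - k i)) * diagonal (fun i => x ^ k i) = x • 1 := fun x => by
    simp only [diagonal_mul_diagonal, ← pow_add, Nat.add_sub_cancel' (hk _),
      Nat.sub_add_cancel (hk _), pow_one, smul_one_eq_diagonal, and_self]
  have hunit : ∀ {M : 𝕜 → Matrix ι ι 𝕜}, ContinuousAt M 0 → (M 0).det ≠ 0 →
      ∀ᶠ x in 𝓝 0, IsUnit (M x).det := fun hM h0 =>
    ((continuous_id.matrix_det.continuousAt.comp hM).eventually_ne h0).mono
      fun _ hx => isUnit_iff_ne_zero.2 hx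
  refine ⟨fun x => (W x)⁻¹ * diagonal (fun i => x ^ (1 - k i)) * (U x)⁻¹,
    ((hW.matrix_inv_of_det_ne_zero hW0).mul
      ((continuous_pi fun i => continuous_pow _).matrix_diagonal.continuousAt)).mul
      (hU.matrix_inv_of_det_ne_zero hU0), ?_⟩
  filter_upwards [hunit hU hU0, hunit hW hW0] with x hUx hWx
  constructor
  · simp only [mul_assoc, mul_nonsing_inv_cancel_left _ _ hWx]
    rw [← mul_assoc (diagonal _), (hD x).1, smul_mul, one_mul, Matrix.mul_smul,
      mul_nonsing_inv _ hUx]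
  · simp only [mul_assoc, nonsing_inv_mul_cancel_left _ _ hUx]
    rw [← mul_assoc (diagonal _), (hD x).2, smul_mul, one_mul, Matrix.mul_smul,
      nonsing_inv_mul _ hWx]

theorem tendsto_smul_inv_of_mul_eq_smul_one {M N : 𝕜 → Matrix ι ι 𝕜} (hN : ContinuousAt N 0)
    (h : ∀ᶠ x in 𝓝 0, M x * N x = x • 1) :
    Tendsto (fun x => x • (M x)⁻¹) (𝓝[≠] 0) (𝓝 (N 0)) := by
  refine (hN.tendsto.mono_left nhdsWithin_le_nhds).congr' ?_
  filter_upwards [nhdsWithin_le_nhds h, self_mem_nhdsWithin] with x hx hx0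
  have hinv : (M x)⁻¹ = x⁻¹ • N x :=
    inv_eq_right_inv (by rw [Matrix.mul_smul, hx, smul_smul, inv_mul_cancel₀ hx0, one_smul])
  rw [hinv, smul_smul, mul_inv_cancel₀ hx0, one_smul]

theorem mulVec_eq_of_mul_eq_smul_one {M N : 𝕜 → Matrix ι ι 𝕜} (hN : ContinuousAt N 0)
    (h : ∀ᶠ x in 𝓝 0, N x * M x = x • 1) {v w : ι → 𝕜}
    (hw : Tendsto (fun x => x⁻¹ • (M x *ᵥ v)) (𝓝[≠] 0) (𝓝 w)) : N 0 *ᵥ w = v := by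
  have hlim : Tendsto (fun x => N x *ᵥ (x⁻¹ • (M x *ᵥ v))) (𝓝[≠] 0) (𝓝 (N 0 *ᵥ w)) :=
    (hN.tendsto.mono_left nhdsWithin_le_nhds).matrix_mulVec hw
  refine tendsto_nhds_unique hlim (tendsto_const_nhds.congr' ?_)
  filter_upwards [nhdsWithin_le_nhds h, self_mem_nhdsWithin] with x hx hx0
  rw [mulVec_smul, mulVec_mulVec, hx, smul_mulVec, one_mulVec, smul_smul, inv_mul_cancel₀ hx0,
    one_smul]

end Analytic

section ComplementaryRanges

variable {K V : Type*} [Field K] [AddCommGroup V] [Module K V] {T B : V →ₗ[K] V}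
  {A : LinearMap.ker T →ₗ[K] V}

theorem LinearMap.range_eq_ker_of_comp_eq_zero (hTB : T ∘ₗ B = 0) (hBA : ∀ v, B (A v) = v) :
    LinearMap.range B = LinearMap.ker T := by
  refine le_antisymm ?_ fun v hv => ⟨A ⟨v, hv⟩, hBA _⟩
  rintro _ ⟨v, rfl⟩
  exact LinearMap.congr_fun hTB v

theorem LinearMap.ker_eq_range_of_comp_eq_zero [FiniteDimensional K V] (hTB : T ∘ₗ B = 0)
    (hBT : B ∘ₗ T = 0) (hBA : ∀ v, B (A v) = v) : LinearMap.ker B = LinearMap.range T := by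
  refine (Submodule.eq_of_le_of_finrank_eq ?_ ?_).symm
  · rintro _ ⟨v, rfl⟩
    exact LinearMap.congr_fun hBT v
  · have hB := finrank_range_add_finrank_ker B
    have hT := finrank_range_add_finrank_ker T
    rw [range_eq_ker_of_comp_eq_zero hTB hBA] at hB
    omega

theorem LinearMap.isCompl_range_of_comp_eq_zero [FiniteDimensional K V] (hTB : T ∘ₗ B = 0)
    (hBT : B ∘ₗ T = 0) (hBA : ∀ v, B (A v) = v) :
    IsCompl (LinearMap.range A) (LinearMap.range T) := by
  have hker := ker_eq_range_of_comp_eq_zero hTB hBT hBA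
  have hmem : ∀ w, B w ∈ LinearMap.ker T := fun w =>
    range_eq_ker_of_comp_eq_zero hTB hBA ▸ mem_range_self B w
  constructor
  · rw [Submodule.disjoint_def]
    rintro _ ⟨v, rfl⟩ hv
    rw [← hker, mem_ker, hBA] at hv
    rw [show v = 0 from Subtype.ext hv, map_zero]
  · rw [codisjoint_iff, Submodule.eq_top_iff']
    intro w
    refine Submodule.mem_sup.2 ⟨A ⟨B w, hmem w⟩, mem_range_self _ _, w - A ⟨B w, hmem w⟩, ?_,
      add_sub_cancel _ _⟩
    rw [← hker, mem_ker, map_sub, hBA, Submodule.coe_mk, sub_self]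

end ComplementaryRanges

theorem Finset.le_one_of_sum_le_card_filter_ne_zero {ι : Type*} [Fintype ι] (m : ι → ℕ)
    (h : ∑ i, m i ≤ #{i | m i ≠ 0}) (i : ι) : m i ≤ 1 := by
  by_contra! hi
  rw [card_filter] at h
  have : ∑ j, (if m j ≠ 0 then 1 else 0) < ∑ j, m j :=
    sum_lt_sum (fun j _ => by split_ifs <;> omega) ⟨i, mem_univ _, by split_ifs <;> omega⟩
  omega

theorem Matrix.exists_continuousAt_map_eval_mul_eq_smul_one {𝕜 ι : Type*}
    [NontriviallyNormedField 𝕜] [Fintype ι] [DecidableEq ι] (p : Matrix ι ι 𝕜[X])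
    (hp : p.det ≠ 0)
    (h : rootMultiplicity 0 p.det ≤ Module.finrank 𝕜 (LinearMap.ker (p.map (eval 0)).mulVecLin)) :
    ∃ N : 𝕜 → Matrix ι ι 𝕜, ContinuousAt N 0 ∧ ∀ᶠ x in 𝓝 0,
      p.map (eval x) * N x = x • 1 ∧ N x * p.map (eval x) = x • 1 := by
  obtain ⟨U, W, k, hU, hW, rfl⟩ := p.exists_eq_mul_diagonal_X_pow_mul hp
  rw [rootMultiplicity_det_mul_diagonal_X_pow_mul _ _ _ hU hW,
    finrank_ker_map_eval_zero_mul_diagonal_X_pow_mul _ _ _ hU hW] at h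
  have hcont : ∀ M : Matrix ι ι 𝕜[X], ContinuousAt (fun x => M.map (eval x)) 0 := fun M =>
    (continuous_matrix fun i j => (M i j).continuous).continuousAt
  simp only [map_eval_mul_diagonal_X_pow_mul]
  exact exists_continuousAt_mul_eq_smul_one_of_le_one (hcont U) (hcont W) hU hW
    (le_one_of_sum_le_card_filter_ne_zero k h)

theorem stmt1_general (N : ℕ) (p : Matrix (Fin N) (Fin N) (Polynomial ℂ))
    (S : ℂ → Matrix (Fin N) (Fin N) ℂ)
    (hS : ∀ (x : ℂ) (i j : Fin N), S x i j = (p i j).eval x)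
    (hdet0 : p.det ≠ 0)
    (d : ℕ)
    (hd : d = Module.finrank ℂ (LinearMap.ker (S 0).mulVecLin))
    (hndiv : ¬ (Polynomial.X : Polynomial ℂ) ^ (d + 1) ∣ p.det) :
    ∃ (A : ↥(LinearMap.ker (S 0).mulVecLin) →ₗ[ℂ] (Fin N → ℂ))
      (B : Matrix (Fin N) (Fin N) ℂ),
      (∀ v : ↥(LinearMap.ker (S 0).mulVecLin),
        Filter.Tendsto (fun x : ℂ => x⁻¹ • (S x).mulVec (v : Fin N → ℂ))
          (nhdsWithin 0 {0}ᶜ) (nhds (A v))) ∧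
      Filter.Tendsto (fun x : ℂ => x • (S x)⁻¹) (nhdsWithin 0 {0}ᶜ) (nhds B) ∧
      IsCompl (LinearMap.range A) (LinearMap.range (S 0).mulVecLin) ∧
      LinearMap.ker B.mulVecLin = LinearMap.range (S 0).mulVecLin ∧
      LinearMap.range B.mulVecLin = LinearMap.ker (S 0).mulVecLin ∧
      (∀ v : ↥(LinearMap.ker (S 0).mulVecLin), B.mulVec (A v) = (v : Fin N → ℂ)) ∧
      ∃ hmem : ∀ v : Fin N → ℂ, B.mulVec v ∈ LinearMap.ker (S 0).mulVecLin,
        (∀ v : Fin N → ℂ, v ∈ LinearMap.range A → A ⟨B.mulVec v, hmem v⟩ = v) ∧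
        (∀ v : Fin N → ℂ, v ∈ LinearMap.range (S 0).mulVecLin →
          A ⟨B.mulVec v, hmem v⟩ = 0) := by
  have hSp : ∀ x, S x = p.map (eval x) := fun x => ext (hS x)
  have hmult : rootMultiplicity 0 p.det ≤ d := by
    by_contra! h
    exact hndiv (by simpa using (le_rootMultiplicity_iff hdet0).1 h)
  obtain ⟨R, hRcont, hR⟩ := p.exists_continuousAt_map_eval_mul_eq_smul_one hdet0
    (by rwa [← hSp, ← hd])
  simp only [← hSp] at hR
  let A : LinearMap.ker (S 0).mulVecLin →ₗ[ℂ] (Fin N → ℂ) :=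
    (p.map fun f => f.derivative.eval 0).mulVecLin ∘ₗ Submodule.subtype _
  have hA : ∀ v : LinearMap.ker (S 0).mulVecLin,
      Tendsto (fun x => x⁻¹ • (S x *ᵥ v)) (𝓝[≠] 0) (𝓝 (A v)) := fun v => by
    have h := p.tendsto_inv_smul_map_eval_mulVec (v := v) (by rw [← hSp]; exact v.2)
    simp only [← hSp] at h
    exact h
  have hBA : ∀ v : LinearMap.ker (S 0).mulVecLin, R 0 *ᵥ A v = v :=
    fun v => mulVec_eq_of_mul_eq_smul_one hRcont (hR.mono fun _ h => h.2) (hA v)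
  have hTB : (S 0).mulVecLin ∘ₗ (R 0).mulVecLin = 0 := by
    rw [← mulVecLin_mul, hR.self_of_nhds.1, zero_smul, mulVecLin_zero]
  have hBT : (R 0).mulVecLin ∘ₗ (S 0).mulVecLin = 0 := by
    rw [← mulVecLin_mul, hR.self_of_nhds.2, zero_smul, mulVecLin_zero]
  have hran := LinearMap.range_eq_ker_of_comp_eq_zero hTB hBA
  have hker := LinearMap.ker_eq_range_of_comp_eq_zero hTB hBT hBA
  have hmem : ∀ v, R 0 *ᵥ v ∈ LinearMap.ker (S 0).mulVecLin :=
    fun v => hran ▸ LinearMap.mem_range_self (R 0).mulVecLin v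
  refine ⟨A, R 0, hA, tendsto_smul_inv_of_mul_eq_smul_one hRcont (hR.mono fun _ h => h.1),
    LinearMap.isCompl_range_of_comp_eq_zero hTB hBT hBA, hker, hran, hBA, hmem, ?_, ?_⟩
  · rintro _ ⟨v, rfl⟩
    exact congrArg A (Subtype.ext (hBA v))
  · intro v hv
    rw [← hker] at hv
    exact (congrArg A (Subtype.ext (LinearMap.mem_ker.1 hv))).trans (map_zero A)

/-- Smith-normal-form analysis of a polynomial family of matrices `S x`
whose determinant vanishes at `x = 0` to order exactly `d = dim Ker(S 0)`. -/
theorem stmt1 (N : ℕ) (p : Matrix (Fin N) (Fin N) (Polynomial ℂ))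
    (S : ℂ → Matrix (Fin N) (Fin N) ℂ)
    (hS : ∀ (x : ℂ) (i j : Fin N), S x i j = (p i j).eval x)
    (hdet0 : p.det ≠ 0)
    (d : ℕ)
    (hd : d = Module.finrank ℂ (LinearMap.ker (S 0).mulVecLin))
    (hdiv : (Polynomial.X : Polynomial ℂ) ^ d ∣ p.det)
    (hndiv : ¬ (Polynomial.X : Polynomial ℂ) ^ (d + 1) ∣ p.det) :
    ∃ (A : ↥(LinearMap.ker (S 0).mulVecLin) →ₗ[ℂ] (Fin N → ℂ))
      (B : Matrix (Fin N) (Fin N) ℂ),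
      (∀ v : ↥(LinearMap.ker (S 0).mulVecLin),
        Filter.Tendsto (fun x : ℂ => x⁻¹ • (S x).mulVec (v : Fin N → ℂ))
          (nhdsWithin 0 {0}ᶜ) (nhds (A v))) ∧
      Filter.Tendsto (fun x : ℂ => x • (S x)⁻¹) (nhdsWithin 0 {0}ᶜ) (nhds B) ∧
      IsCompl (LinearMap.range A) (LinearMap.range (S 0).mulVecLin) ∧
      LinearMap.ker B.mulVecLin = LinearMap.range (S 0).mulVecLin ∧
      LinearMap.range B.mulVecLin = LinearMap.ker (S 0).mulVecLin ∧
      (∀ v : ↥(LinearMap.ker (S 0).mulVecLin), B.mulVec (A v) = (v : Fin N → ℂ)) ∧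
      ∃ hmem : ∀ v : Fin N → ℂ, B.mulVec v ∈ LinearMap.ker (S 0).mulVecLin,
        (∀ v : Fin N → ℂ, v ∈ LinearMap.range A → A ⟨B.mulVec v, hmem v⟩ = v) ∧
        (∀ v : Fin N → ℂ, v ∈ LinearMap.range (S 0).mulVecLin →
          A ⟨B.mulVec v, hmem v⟩ = 0) :=
  stmt1_general N p S hS hdet0 d hd hndiv
end

section
/- Let 𝔤 be a Lie algebra over a field of characteristic zero, let x ∈ 𝔤 be ad-nilpotent on a given element in the following sense: for r in the universal enveloping algebra U𝔤, suppose [x,·]^n(r) = 0 for some n ∈ ℕ (where [x,·] denotes the commutator derivation ad(x) extended to U𝔤). Then r·x^n = x·∑_{i=0}^{n-1} C(n,i)·x^{n-i-1}·[·,x]^i(r), where [·,x] = −ad(x). In particular, the multiplicative set generated by a set of locally ad-nilpotent elements of 𝔤 satisfies the right Ore condition in U𝔤. -/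
/-! Write right multiplication by `c` as `R_c = L_c - ad c`. Since `L_c` and `ad c` commute, the
binomial theorem gives `r c^n = ∑_{i ≤ n} C(n,i) c^(n-i) (-ad c)^i r`; the term `i = n` vanishes
when `(ad c)^n r = 0`, and every other term has `c` as a left factor.

For the Ore condition: `ad (ι t)` is a derivation of `U𝔤`, so the elements killed by a power of
it form a subalgebra. It contains `ι 𝔤` when `t` is locally ad-nilpotent, hence is all of `U𝔤`,
and the formula then puts `u (ι t)^m` into `ι t · U𝔤`. Finally a right Ore condition on the
generators of a monoid passes to the whole monoid. -/

open UniversalEnvelopingAlgebra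

open Finset LieAlgebra

section InnerDerivation

attribute [local instance] LieRing.ofAssociativeRing LieAlgebra.ofAssociativeAlgebra

variable {k A : Type*} [CommRing k] [Ring A] [Algebra k A]

lemma ad_apply_mul (c u v : A) : ad k A c (u * v) = ad k A c u * v + u * ad k A c v := by
  simp only [ad_apply, Ring.lie_def]
  noncomm_ring

lemma ad_pow_add_apply_mul_eq_zero (c : A) {n m : ℕ} {u v : A}
    (hu : (ad k A c ^ n) u = 0) (hv : (ad k A c ^ m) v = 0) :
    (ad k A c ^ (n + m)) (u * v) = 0 := by
  induction n generalizing m u v with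
  | zero => simp_all
  | succ n ihn =>
    induction m generalizing v with
    | zero => simp_all
    | succ m ihm =>
      rw [pow_succ, Module.End.mul_apply] at hu hv
      have h₁ := ihn hu (m := m + 1) (by rwa [pow_succ, Module.End.mul_apply])
      have h₂ := ihm hv
      rw [show n + 1 + (m + 1) = n + (m + 1) + 1 by omega, pow_succ, Module.End.mul_apply,
        ad_apply_mul, map_add, h₁, zero_add, show n + (m + 1) = n + 1 + m by omega, h₂]

variable (k) in
def adLocallyNilpotent (c : A) : Subalgebra k A where
  carrier := {u | ∃ n, (ad k A c ^ n) u = 0}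
  mul_mem' := fun ⟨n, hu⟩ ⟨m, hv⟩ => ⟨n + m, ad_pow_add_apply_mul_eq_zero c hu hv⟩
  add_mem' := fun {u v} ⟨n, hu⟩ ⟨m, hv⟩ => ⟨max n m, by
    rw [map_add, Module.End.pow_map_zero_of_le (le_max_left n m) hu,
      Module.End.pow_map_zero_of_le (le_max_right n m) hv, add_zero]⟩
  algebraMap_mem' r := ⟨1, by simp [Ring.lie_def, Algebra.commutes]⟩

lemma mul_pow_eq_mul_sum_of_ad_pow_eq_zero {c r : A} {n : ℕ} (h : (ad k A c ^ n) r = 0) :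
    r * c ^ n = c * ∑ i ∈ range n, n.choose i • (c ^ (n - i - 1) * ((-ad k A c) ^ i) r) := by
  have had : ad k A c = LinearMap.mulLeft k c - LinearMap.mulRight k c :=
    congrFun (ad_eq_lmul_left_sub_lmul_right (R := k) A) c
  have hmulRight : LinearMap.mulRight k c = -ad k A c + LinearMap.mulLeft k c := by
    rw [had, neg_sub, sub_add_cancel]
  have hcomm : Commute (-ad k A c) (LinearMap.mulLeft k c) := by
    rw [had]
    exact ((Commute.refl _).sub_right (LinearMap.commute_mulLeft_right c c)).neg_right.symm
  have hterm : ∀ i, ((-ad k A c) ^ i * LinearMap.mulLeft k c ^ (n - i) *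
      (n.choose i : Module.End k A)) r = n.choose i • (c ^ (n - i) * ((-ad k A c) ^ i) r) := by
    intro i
    rw [(hcomm.pow_pow i (n - i)).eq]
    simp only [Module.End.mul_apply, Module.End.natCast_apply, map_nsmul,
      LinearMap.pow_mulLeft, LinearMap.mulLeft_apply]
  calc r * c ^ n = (LinearMap.mulRight k c ^ n) r := by simp [LinearMap.pow_mulRight]
    _ = ∑ i ∈ range (n + 1), n.choose i • (c ^ (n - i) * ((-ad k A c) ^ i) r) := by
      rw [hmulRight, hcomm.add_pow, LinearMap.sum_apply]; simp only [hterm]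
    _ = _ := by
      rw [sum_range_succ, neg_pow, Module.End.mul_apply, h, map_zero, mul_zero, smul_zero,
        add_zero, mul_sum]
      refine sum_congr rfl fun i hi => ?_
      rw [mul_smul_comm, ← mul_assoc, ← pow_succ',
        Nat.sub_add_cancel (Nat.sub_pos_of_lt (mem_range.mp hi))]

variable (k) in
lemma iterate_commutator_eq_ad_pow (c : A) (n : ℕ) :
    (fun a => c * a - a * c)^[n] = ⇑(ad k A c ^ n) := by
  rw [Module.End.coe_pow]; rfl

variable (k) in
lemma iterate_commutator_symm_eq_neg_ad_pow (c : A) (n : ℕ) :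
    (fun a => a * c - c * a)^[n] = ⇑((-ad k A c) ^ n) := by
  rw [Module.End.coe_pow]
  congr 1
  ext a
  simp [Ring.lie_def]

end InnerDerivation

lemma Submonoid.exists_mul_eq_mul_of_mem_closure {M : Type*} [Monoid M] {S : Set M}
    (hS : ∀ s ∈ S, ∀ u : M, ∃ u' s', s' ∈ Submonoid.closure S ∧ u * s' = s * u')
    {s : M} (hs : s ∈ Submonoid.closure S) (u : M) :
    ∃ u' s', s' ∈ Submonoid.closure S ∧ u * s' = s * u' := by
  induction hs using Submonoid.closure_induction generalizing u with
  | mem s hs => exact hS s hs u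
  | one => exact ⟨u, 1, one_mem _, by rw [mul_one, one_mul]⟩
  | mul a b _ _ iha ihb =>
    obtain ⟨u₁, s₁, hs₁, h₁⟩ := iha u
    obtain ⟨u₂, s₂, hs₂, h₂⟩ := ihb u₁
    exact ⟨u₂, s₁ * s₂, mul_mem hs₁ hs₂, by rw [← mul_assoc, h₁, mul_assoc, h₂, mul_assoc]⟩

namespace UniversalEnvelopingAlgebra

attribute [local instance] LieRing.ofAssociativeRing LieAlgebra.ofAssociativeAlgebra

variable {k L : Type*} [CommRing k] [LieRing L] [LieAlgebra k L]

lemma adjoin_range_ι :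
    Algebra.adjoin k (Set.range (ι k : L → UniversalEnvelopingAlgebra k L)) = ⊤ := by
  have hrange : Set.range (ι k : L → UniversalEnvelopingAlgebra k L) =
      mkAlgHom k L '' Set.range (TensorAlgebra.ι k) := by
    rw [← Set.range_comp]; rfl
  rw [hrange, ← AlgHom.map_adjoin, TensorAlgebra.adjoin_range_ι, Algebra.map_top,
    AlgHom.range_eq_top]
  exact RingCon.mkₐ_surjective _

lemma ad_ι_pow_apply_ι (t y : L) (n : ℕ) :
    (ad k _ (ι k t) ^ n) (ι k y) = ι k ((ad k L t ^ n) y) := by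
  have h : (ad k _ (ι k t)).comp (ι k (L := L)).toLinearMap =
      (ι k (L := L)).toLinearMap.comp (ad k L t) := by
    ext y; exact ((ι k).map_lie t y).symm
  exact LinearMap.congr_fun (Module.End.commute_pow_left_of_commute h n) y

lemma adLocallyNilpotent_ι_eq_top {t : L} (ht : ∀ y : L, ∃ m, (ad k L t ^ m) y = 0) :
    adLocallyNilpotent k (ι k t) = ⊤ := by
  rw [eq_top_iff, ← adjoin_range_ι, Algebra.adjoin_le_iff]
  rintro _ ⟨y, rfl⟩
  obtain ⟨m, hm⟩ := ht y
  exact ⟨m, by rw [ad_ι_pow_apply_ι, hm, map_zero]⟩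

end UniversalEnvelopingAlgebra

theorem stmt3_general (k : Type*) [Field k]
    (L : Type*) [LieRing L] [LieAlgebra k L]
    (x : L) (r : UniversalEnvelopingAlgebra k L) (n : ℕ)
    (hn : (fun a : UniversalEnvelopingAlgebra k L =>
        ι k x * a - a * ι k x)^[n] r = 0) :
    r * (ι k x : UniversalEnvelopingAlgebra k L) ^ n =
      (ι k x : UniversalEnvelopingAlgebra k L) *
        ∑ i ∈ Finset.range n, (n.choose i : k) •
          ((ι k x : UniversalEnvelopingAlgebra k L) ^ (n - i - 1) *
            (fun a : UniversalEnvelopingAlgebra k L =>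
              a * ι k x - ι k x * a)^[i] r) ∧
    ∀ (T : Set L),
      (∀ t ∈ T, ∀ y : L, ∃ m : ℕ, ((LieAlgebra.ad k L t) ^ m) y = 0) →
      ∀ (u : UniversalEnvelopingAlgebra k L)
        (s : UniversalEnvelopingAlgebra k L),
        s ∈ Submonoid.closure ((fun t => (ι k t : UniversalEnvelopingAlgebra k L)) '' T) →
        ∃ (u' s' : UniversalEnvelopingAlgebra k L),
          s' ∈ Submonoid.closure ((fun t => (ι k t : UniversalEnvelopingAlgebra k L)) '' T) ∧
          u * s' = s * u' := by
  constructor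
  · rw [iterate_commutator_eq_ad_pow k] at hn
    simp only [iterate_commutator_symm_eq_neg_ad_pow k, Nat.cast_smul_eq_nsmul]
    exact mul_pow_eq_mul_sum_of_ad_pow_eq_zero hn
  · intro T hT u s hs
    refine Submonoid.exists_mul_eq_mul_of_mem_closure ?_ hs u
    rintro _ ⟨t, htT, rfl⟩ u
    obtain ⟨m, hm⟩ : u ∈ adLocallyNilpotent k (ι k t) := by
      rw [adLocallyNilpotent_ι_eq_top (hT t htT)]; trivial
    exact ⟨_, _, pow_mem (Submonoid.subset_closure (Set.mem_image_of_mem _ htT)) m,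
      mul_pow_eq_mul_sum_of_ad_pow_eq_zero hm⟩

/-- in the universal enveloping algebra `U 𝔤`, if `ad(x)^n r = 0` then
`r·x^n = x·∑_{i=0}^{n-1} C(n,i)·x^{n-i-1}·[·,x]^i(r)`; in particular the multiplicative
set generated by (images of) locally ad-nilpotent elements of `𝔤` satisfies the right
Ore condition in `U 𝔤`. -/
theorem stmt3 (k : Type*) [Field k] [CharZero k]
    (L : Type*) [LieRing L] [LieAlgebra k L]
    (x : L) (r : UniversalEnvelopingAlgebra k L) (n : ℕ)
    (hn : (fun a : UniversalEnvelopingAlgebra k L =>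
        ι k x * a - a * ι k x)^[n] r = 0) :
    r * (ι k x : UniversalEnvelopingAlgebra k L) ^ n =
      (ι k x : UniversalEnvelopingAlgebra k L) *
        ∑ i ∈ Finset.range n, (n.choose i : k) •
          ((ι k x : UniversalEnvelopingAlgebra k L) ^ (n - i - 1) *
            (fun a : UniversalEnvelopingAlgebra k L =>
              a * ι k x - ι k x * a)^[i] r) ∧
    ∀ (T : Set L),
      (∀ t ∈ T, ∀ y : L, ∃ m : ℕ, ((LieAlgebra.ad k L t) ^ m) y = 0) →
      ∀ (u : UniversalEnvelopingAlgebra k L)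
        (s : UniversalEnvelopingAlgebra k L),
        s ∈ Submonoid.closure ((fun t => (ι k t : UniversalEnvelopingAlgebra k L)) '' T) →
        ∃ (u' s' : UniversalEnvelopingAlgebra k L),
          s' ∈ Submonoid.closure ((fun t => (ι k t : UniversalEnvelopingAlgebra k L)) '' T) ∧
          u * s' = s * u' :=
  stmt3_general k L x r n hn
end

section
/- Let 𝔴 be the Lie algebra spanned by a_n, β_n, γ_n (n ∈ ℤ) and a central element I with commutators [γ_m, β_n] = δ_{m+n}·I and [a_m, a_n] = (m/2)·δ_{m+n}·I. Fix κ ≠ 0 and j ∈ ℂ, set k = κ² − 2, and let 𝒲^{κ,j} be the quotient of U𝔴 by the left ideal generated by a₀ − κ^{-1}j, I − 1, and all β_n (n ≥ 0), γ_n (n ≥ 1), a_n (n ≥ 1). Define operators J⁺_n = β_n, J⁰_n = ∑_m :γ_{−m}β_{n+m}: + κ·a_n, and J⁻_n via the Wakimoto formula J⁻ = −:γ²β: − 2κγ∂φ − k∂γ (in modes). Then these operators satisfy the sl2-hat relations at level k, and the image w of 1 satisfies J⁰₀·w = j·w and is annihilated by J⁺₀ and by all J^a_n with n > 0. -/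
/-!
Each current is a sum of normal-ordered monomials in the free fields, so every bracket can be
computed one mode at a time. `J⁰_n` acts on the generators by `β_r ↦ β_{n+r}`, `γ_x ↦ -γ_{n+x}`,
`a_x ↦ κ [a_n, a_x]`, hence on a normal-ordered monomial by the Leibniz rule, after which the
shifted monomials are put back into normal order. The reordering leaves scalar remainders which
do not cancel term by term but telescope: they sum to `-n` for `:γβ:` and to `-2n γ_{n+m}` for
`:γ²β:`, and together with the Heisenberg contribution `κ² n / 2` they produce the level
`k = κ² - 2`. Likewise `β_x` acts on `:γ²β:` by deleting a factor `γ_{-x}` with a minus sign,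
which yields `-2 :γβ:` and hence the term `2 J⁰` of `[J⁺, J⁻]`. The highest-weight identities
hold term by term, because every normal-ordered monomial of nonnegative (resp. positive) mode
ends in an annihilator of the vacuum.
-/

open Function

attribute [local instance] LieRing.ofAssociativeRing

theorem Ring.lie_mul {A : Type*} [Ring A] (x y z : A) : ⁅x, y * z⁆ = ⁅x, y⁆ * z + y * ⁅x, z⁆ := by
  simp only [Ring.lie_def, mul_sub, sub_mul, mul_assoc]
  abel

theorem Ring.lie_ite_one_zero {A : Type*} [Ring A] (x : A) (P : Prop) [Decidable P] :
    ⁅x, if P then (1 : A) else 0⁆ = 0 := by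
  split_ifs <;> simp [Ring.lie_def]

theorem Commute.apply_comm {R M : Type*} [Semiring R] [AddCommGroup M] [Module R M]
    {f g : Module.End R M} (h : Commute f g) (v : M) : f (g v) = g (f v) :=
  LinearMap.congr_fun h.eq v

theorem Module.End.lie_apply_eq_sub {R M : Type*} [Semiring R] [AddCommGroup M] [Module R M]
    (X Y : Module.End R M) (v : M) : ⁅X, Y⁆ v = X (Y v) - Y (X v) := by
  rw [Ring.lie_def, LinearMap.sub_apply, Module.End.mul_apply, Module.End.mul_apply]

theorem Module.End.lie_finsum_apply {R M ι : Type*} [Semiring R] [AddCommGroup M] [Module R M]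
    (X : Module.End R M) (F : ι → Module.End R M) (v : M)
    (hv : HasFiniteSupport fun i => F i v) (hXv : HasFiniteSupport fun i => F i (X v)) :
    X (∑ᶠ i, F i v) - ∑ᶠ i, F i (X v) = ∑ᶠ i, ⁅X, F i⁆ v := by
  rw [map_finsum X hv, ← finsum_sub_distrib (hv.fun_comp (map_zero X)) hXv]
  simp only [Module.End.lie_apply_eq_sub]

theorem hasFiniteSupport_ite_eq {α M : Type*} [DecidableEq α] [Zero M] (c : α) (x : M) :
    HasFiniteSupport fun a => if a = c then x else 0 :=
  (Set.finite_singleton c).subset fun _ ha => by_contra fun hac => ha (if_neg hac)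

theorem finsum_ite_eq {α M : Type*} [DecidableEq α] [AddCommMonoid M] (c : α) (x : M) :
    ∑ᶠ a, (if a = c then x else 0) = x := by
  rw [finsum_eq_single _ c fun a ha => if_neg ha, if_pos rfl]

theorem finsum_comp_sub_right {G M : Type*} [AddGroup G] [AddCommMonoid M] (f : G → M) (t : G) :
    ∑ᶠ g, f (g - t) = ∑ᶠ g, f g :=
  finsum_comp_equiv (Equiv.subRight t)

theorem finsum_comp_neg {G M : Type*} [AddGroup G] [AddCommMonoid M] (f : G → M) :
    ∑ᶠ g, f (-g) = ∑ᶠ g, f g :=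
  finsum_comp_equiv (Equiv.neg G)

theorem hasFiniteSupport_prod_ite_fst_eq {α β M : Type*} [DecidableEq α] [Zero M] (c : α)
    {f : β → M} (hf : HasFiniteSupport f) :
    HasFiniteSupport fun ab : α × β => if ab.1 = c then f ab.2 else 0 :=
  ((Set.finite_singleton c).prod hf).subset fun ab hab => by
    by_cases h : ab.1 = c
    · exact ⟨h, by simpa [h] using hab⟩
    · exact absurd (if_neg h) hab

theorem finsum_prod_ite_fst_eq {α β M : Type*} [DecidableEq α] [AddCommMonoid M] (c : α)
    {f : β → M} (hf : HasFiniteSupport f) :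
    ∑ᶠ ab : α × β, (if ab.1 = c then f ab.2 else 0) = ∑ᶠ b, f b := by
  rw [finsum_curry _ (hasFiniteSupport_prod_ite_fst_eq c hf),
    finsum_eq_single _ c fun a ha => by simp [ha]]
  simp

theorem hasFiniteSupport_prod_ite_add_ite {α M : Type*} [DecidableEq α] [AddZeroClass M]
    (c : α) {f : α → M} (hf : HasFiniteSupport f) :
    HasFiniteSupport fun ab : α × α =>
      (if ab.1 = c then f ab.2 else 0) + if ab.2 = c then f ab.1 else 0 :=
  (hasFiniteSupport_prod_ite_fst_eq c hf).fun_add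
    ((hasFiniteSupport_prod_ite_fst_eq c hf).comp_of_injective (Equiv.prodComm α α).injective)

theorem finsum_prod_ite_add_ite {α M : Type*} [DecidableEq α] [AddCommMonoid M] (c : α)
    {f : α → M} (hf : HasFiniteSupport f) :
    ∑ᶠ ab : α × α, ((if ab.1 = c then f ab.2 else 0) + if ab.2 = c then f ab.1 else 0)
      = 2 • ∑ᶠ a, f a := by
  have hfst := hasFiniteSupport_prod_ite_fst_eq (β := α) c hf
  have hsnd : HasFiniteSupport fun ab : α × α => if ab.2 = c then f ab.1 else 0 :=
    hfst.comp_of_injective (Equiv.prodComm α α).injective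
  rw [finsum_add_distrib hfst hsnd, two_nsmul, ← finsum_prod_ite_fst_eq c hf]
  congr 1
  exact finsum_comp_equiv (Equiv.prodComm α α) (f := fun ab => if ab.1 = c then f ab.2 else 0)

def stepDiff (a b q : ℤ) : ℂ := (if a < q then 1 else 0) - if b < q then 1 else 0

theorem hasFiniteSupport_stepDiff (a b : ℤ) : HasFiniteSupport (stepDiff a b) := by
  refine (Set.finite_Ioc (min a b) (max a b)).subset fun q hq => ?_
  simp only [mem_support] at hq
  contrapose! hq
  rw [Set.mem_Ioc, not_and_or, not_lt, not_le] at hq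
  unfold stepDiff
  split_ifs <;> first | omega | simp

theorem finsum_stepDiff (a b : ℤ) : ∑ᶠ q, stepDiff a b q = b - a := by
  induction b using Int.inductionOn' (b := a) with
  | zero => simp [stepDiff]
  | succ b _ ih =>
    have hstep : stepDiff a (b + 1) = fun q => stepDiff a b q + if q = b + 1 then 1 else 0 := by
      ext q; unfold stepDiff; split_ifs <;> first | omega | ring
    rw [hstep, finsum_add_distrib (hasFiniteSupport_stepDiff a b) (hasFiniteSupport_ite_eq _ _),
      ih, finsum_ite_eq]
    push_cast; ring
  | pred b _ ih =>
    have hstep : stepDiff a (b - 1) = fun q => stepDiff a b q - if q = b then 1 else 0 := by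
      ext q; unfold stepDiff; split_ifs <;> first | omega | ring
    rw [hstep, finsum_sub_distrib (hasFiniteSupport_stepDiff a b) (hasFiniteSupport_ite_eq _ _),
      ih, finsum_ite_eq]
    push_cast; ring

section FreeFieldRep

variable {M : Type*} [AddCommGroup M] [Module ℂ M]

/-- A smooth module over the oscillator algebra `𝔴` on which the central element acts as `1`. -/
structure IsFreeFieldRep (a β γ : ℤ → Module.End ℂ M) : Prop where
  lie_γ_β : ∀ m n, ⁅γ m, β n⁆ = if m + n = 0 then 1 else 0
  lie_a_a : ∀ m n, ⁅a m, a n⁆ = (if m + n = 0 then (m : ℂ) / 2 else 0) • 1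
  commute_a_β : ∀ m n, Commute (a m) (β n)
  commute_a_γ : ∀ m n, Commute (a m) (γ n)
  commute_β_β : ∀ m n, Commute (β m) (β n)
  commute_γ_γ : ∀ m n, Commute (γ m) (γ n)
  exists_forall_ge_eq_zero : ∀ v, ∃ N, ∀ n, N ≤ n → a n v = 0 ∧ β n v = 0 ∧ γ n v = 0

/-- The mode `:γ_{-q} β_{m+q}:`, the `q`-th summand of `∑_q :γ_{-q} β_{m+q}:`. -/
def normOrdγβ (β γ : ℤ → Module.End ℂ M) (m q : ℤ) : Module.End ℂ M :=
  if 0 ≤ m + q then γ (-q) * β (m + q) else β (m + q) * γ (-q)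

/-- The mode `:γ_p γ_q β_{m-p-q}:`, the `(p, q)`-th summand of `(:γ²β:)_m`. -/
def normOrdγγβ (β γ : ℤ → Module.End ℂ M) (m : ℤ) (pq : ℤ × ℤ) : Module.End ℂ M :=
  if 0 ≤ m - pq.1 - pq.2 then γ pq.1 * γ pq.2 * β (m - pq.1 - pq.2)
  else β (m - pq.1 - pq.2) * γ pq.1 * γ pq.2

variable {a β γ : ℤ → Module.End ℂ M} {w : M}

theorem normOrdγβ_apply_eq_zero (hwβ : ∀ n : ℤ, 0 ≤ n → β n w = 0)
    (hwγ : ∀ n : ℤ, 1 ≤ n → γ n w = 0) {n : ℤ} (hn : 0 ≤ n) (q : ℤ) :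
    normOrdγβ β γ n q w = 0 := by
  unfold normOrdγβ
  split_ifs with hq
  · rw [Module.End.mul_apply, hwβ _ hq, map_zero]
  · rw [Module.End.mul_apply, hwγ _ (by omega), map_zero]

namespace IsFreeFieldRep

variable (h : IsFreeFieldRep a β γ)
include h

theorem exists_pos_forall_ge_eq_zero (v : M) :
    ∃ N, 0 < N ∧ ∀ n, N ≤ n → a n v = 0 ∧ β n v = 0 ∧ γ n v = 0 := by
  obtain ⟨N, hN⟩ := h.exists_forall_ge_eq_zero v
  exact ⟨max N 1, by positivity, fun n hn => hN n (le_of_max_le_left hn)⟩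

theorem β_mul_γ (j i : ℤ) : β j * γ i = γ i * β j - if i + j = 0 then 1 else 0 := by
  rw [← h.lie_γ_β, Ring.lie_def, sub_sub_cancel]

theorem lie_β_γ (j i : ℤ) : ⁅β j, γ i⁆ = -if i + j = 0 then 1 else 0 := by
  rw [← lie_skew, h.lie_γ_β]

theorem γ_β_apply_eq_of_ne {i j : ℤ} (hij : i + j ≠ 0) (v : M) : γ i (β j v) = β j (γ i v) := by
  rw [← Module.End.mul_apply, ← Module.End.mul_apply, ← sub_eq_zero, ← LinearMap.sub_apply,
    ← Ring.lie_def, h.lie_γ_β, if_neg hij, LinearMap.zero_apply]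

theorem hasFiniteSupport_normOrdγβ (m : ℤ) (v : M) :
    HasFiniteSupport fun q => normOrdγβ β γ m q v := by
  obtain ⟨N, hN0, hN⟩ := h.exists_pos_forall_ge_eq_zero v
  refine (Set.finite_Icc (min (-m) (-N)) (N - m)).subset fun q hq => ?_
  simp only [mem_support] at hq
  contrapose! hq
  rw [Set.mem_Icc, not_and_or, not_le, not_le] at hq
  unfold normOrdγβ
  split_ifs
  · simp [(hN (m + q) (by omega)).2.1]
  · simp [(hN (-q) (by omega)).2.2]

theorem hasFiniteSupport_γ_mul_a (m : ℤ) (v : M) :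
    HasFiniteSupport fun q => (γ (m - q) * a q) v := by
  obtain ⟨N, hN⟩ := h.exists_forall_ge_eq_zero v
  refine (Set.finite_Icc (m - N) N).subset fun q hq => ?_
  simp only [mem_support] at hq
  contrapose! hq
  rw [Set.mem_Icc, not_and_or, not_le, not_le] at hq
  rcases hq with hq | hq
  · rw [Module.End.mul_apply, ← (h.commute_a_γ q (m - q)).apply_comm,
      (hN (m - q) (by omega)).2.2, map_zero]
  · rw [Module.End.mul_apply, (hN q hq.le).1, map_zero]

theorem hasFiniteSupport_normOrdγγβ (m : ℤ) (v : M) :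
    HasFiniteSupport fun pq => normOrdγγβ β γ m pq v := by
  obtain ⟨N, hN0, hN⟩ := h.exists_pos_forall_ge_eq_zero v
  refine ((Set.finite_Icc (m - 2 * N) N).prod (Set.finite_Icc (m - 2 * N) N)).subset ?_
  rintro ⟨p, q⟩ hpq
  simp only [mem_support, normOrdγγβ] at hpq
  simp only [Set.mem_prod, Set.mem_Icc]
  split_ifs at hpq with hr <;> simp only [Module.End.mul_apply] at hpq
  · have hr' : m - p - q < N := by
      by_contra! hr'
      exact hpq (by rw [(hN _ hr').2.1, map_zero, map_zero])
    -- `γ_p` and `γ_q` commute past `β_{m-p-q}` since `m - p - q ≥ 0` and `N > 0`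
    have hp : p < N := by
      by_contra! hp
      apply hpq
      rw [(h.commute_γ_γ p q).apply_comm, h.γ_β_apply_eq_of_ne (by omega), (hN p hp).2.2,
        map_zero, map_zero]
    have hq : q < N := by
      by_contra! hq
      apply hpq
      rw [h.γ_β_apply_eq_of_ne (by omega), (hN q hq).2.2, map_zero, map_zero]
    omega
  · have hp : p < N := by
      by_contra! hp
      exact hpq (by rw [(h.commute_γ_γ p q).apply_comm, (hN p hp).2.2, map_zero, map_zero])
    have hq : q < N := by
      by_contra! hq
      exact hpq (by rw [(hN q hq).2.2, map_zero, map_zero])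
    omega

theorem normOrdγβ_eq (m q : ℤ) :
    normOrdγβ β γ m q = γ (-q) * β (m + q) - if m = 0 ∧ q < 0 then 1 else 0 := by
  unfold normOrdγβ
  by_cases hmq : 0 ≤ m + q
  · rw [if_pos hmq, if_neg (by omega), sub_zero]
  · rw [if_neg hmq, h.β_mul_γ]
    simp only [show -q + (m + q) = 0 ↔ m = 0 ∧ q < 0 by omega]

theorem normOrdγγβ_eq (m p q : ℤ) :
    normOrdγγβ β γ m (p, q) = γ p * γ q * β (m - p - q)
      - ((if p = m ∧ 0 < q then 1 else 0) + if q = m ∧ 0 < p then 1 else 0 : ℂ) • γ m := by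
  unfold normOrdγγβ
  dsimp only
  by_cases hr : 0 ≤ m - p - q
  · rw [if_pos hr, if_neg (by omega), if_neg (by omega), add_zero, zero_smul, sub_zero]
  · rw [if_neg hr, h.β_mul_γ, sub_mul, mul_assoc, h.β_mul_γ, mul_sub, ← mul_assoc]
    simp only [show p + (m - p - q) = 0 ↔ q = m by omega,
      show q + (m - p - q) = 0 ↔ p = m by omega, show p = m ∧ 0 < q ↔ p = m by omega,
      show q = m ∧ 0 < p ↔ q = m by omega]
    by_cases hp : p = m <;> by_cases hq : q = m <;> subst_vars <;> simp [add_smul, *]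
    abel

theorem lie_β_normOrdγβ (r m q : ℤ) :
    ⁅β r, normOrdγβ β γ m q⁆ = -if q = r then β (m + r) else 0 := by
  rw [h.normOrdγβ_eq, lie_sub, Ring.lie_mul, h.lie_β_γ, (h.commute_β_β r _).lie_eq,
    Ring.lie_ite_one_zero, mul_zero, add_zero, sub_zero]
  by_cases hq : q = r
  · subst hq; simp
  · rw [if_neg (by omega), if_neg hq]; simp

theorem lie_γ_normOrdγβ (x m q : ℤ) :
    ⁅γ x, normOrdγβ β γ m q⁆ = if q = -(m + x) then γ (m + x) else 0 := by
  rw [h.normOrdγβ_eq, lie_sub, Ring.lie_mul, (h.commute_γ_γ x _).lie_eq, h.lie_γ_β,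
    Ring.lie_ite_one_zero, zero_mul, zero_add, sub_zero]
  by_cases hq : q = -(m + x)
  · subst hq; simp
  · rw [if_neg (by omega), if_neg hq, mul_zero]

theorem commute_a_normOrdγβ (x m q : ℤ) : Commute (a x) (normOrdγβ β γ m q) := by
  unfold normOrdγβ
  split_ifs
  · exact (h.commute_a_γ _ _).mul_right (h.commute_a_β _ _)
  · exact (h.commute_a_β _ _).mul_right (h.commute_a_γ _ _)

theorem lie_β_γ_mul_a (x m q : ℤ) :
    ⁅β x, γ (m - q) * a q⁆ = -if q = x + m then a (x + m) else 0 := by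
  rw [Ring.lie_mul, h.lie_β_γ, (h.commute_a_β q x).symm.lie_eq, mul_zero, add_zero]
  by_cases hq : q = x + m
  · subst hq
    rw [if_pos (by ring), if_pos rfl, neg_mul, one_mul]
  · rw [if_neg (by omega), if_neg hq, neg_zero, zero_mul]

theorem lie_β_normOrdγγβ (x m : ℤ) (pq : ℤ × ℤ) :
    ⁅β x, normOrdγγβ β γ m pq⁆ = -((if pq.1 = -x then normOrdγβ β γ (x + m) (-pq.2) else 0)
      + if pq.2 = -x then normOrdγβ β γ (x + m) (-pq.1) else 0) := by
  obtain ⟨p, q⟩ := pq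
  have hline : ∀ i j, (if i = -x then normOrdγβ β γ (x + m) (-j) else 0)
      = if i = -x then normOrdγβ β γ (m - i) (-j) else 0 := by
    intro i j
    split_ifs with hi
    · rw [hi, sub_neg_eq_add, add_comm]
    · rfl
  have hβγ : ∀ i, ⁅β x, γ i⁆ = -if i = -x then 1 else 0 := fun i => by
    rw [h.lie_β_γ]
    simp only [show i + x = 0 ↔ i = -x by omega]
  have hββ : ∀ j, ⁅β x, β j⁆ = 0 := fun j => (h.commute_β_β x j).lie_eq
  dsimp only
  rw [hline, hline]
  unfold normOrdγγβ normOrdγβ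
  simp only [neg_neg, show m - p + -q = m - p - q by ring, show m - q + -p = m - p - q by ring]
  split_ifs <;> simp only [Ring.lie_mul, if_true, if_false, *] <;> noncomm_ring

theorem lie_β_finsum_γ_mul_a (x m : ℤ) (v : M) :
    β x (∑ᶠ q, (γ (m - q) * a q) v) - ∑ᶠ q, (γ (m - q) * a q) (β x v) = -a (x + m) v := by
  rw [(β x).lie_finsum_apply _ v (h.hasFiniteSupport_γ_mul_a m v)
    (h.hasFiniteSupport_γ_mul_a m _)]
  simp only [h.lie_β_γ_mul_a, LinearMap.neg_apply, DFunLike.ite_apply, LinearMap.zero_apply,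
    finsum_neg_distrib, finsum_ite_eq]

theorem lie_β_finsum_normOrdγγβ (x m : ℤ) (v : M) :
    β x (∑ᶠ pq, normOrdγγβ β γ m pq v) - ∑ᶠ pq, normOrdγγβ β γ m pq (β x v)
      = -(2 • ∑ᶠ q, normOrdγβ β γ (x + m) q v) := by
  rw [(β x).lie_finsum_apply _ v (h.hasFiniteSupport_normOrdγγβ m v)
    (h.hasFiniteSupport_normOrdγγβ m _)]
  simp only [h.lie_β_normOrdγγβ, LinearMap.neg_apply, LinearMap.add_apply, DFunLike.ite_apply,
    LinearMap.zero_apply, finsum_neg_distrib]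
  have hfin : HasFiniteSupport fun q => normOrdγβ β γ (x + m) (-q) v :=
    (h.hasFiniteSupport_normOrdγβ (x + m) v).comp_of_injective neg_injective
  rw [finsum_prod_ite_add_ite (-x) hfin, finsum_comp_neg fun q => normOrdγβ β γ (x + m) q v]

theorem γ_mul_a_apply_eq_zero (hwγ : ∀ n : ℤ, 1 ≤ n → γ n w = 0)
    (hwa : ∀ n : ℤ, 1 ≤ n → a n w = 0) {n : ℤ} (hn : 1 ≤ n) (q : ℤ) :
    (γ (n - q) * a q) w = 0 := by
  rw [Module.End.mul_apply]
  by_cases hq : 1 ≤ q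
  · rw [hwa q hq, map_zero]
  · rw [← (h.commute_a_γ q (n - q)).apply_comm, hwγ _ (by omega), map_zero]

theorem normOrdγγβ_apply_eq_zero (hwβ : ∀ n : ℤ, 0 ≤ n → β n w = 0)
    (hwγ : ∀ n : ℤ, 1 ≤ n → γ n w = 0) {n : ℤ} (hn : 1 ≤ n) (pq : ℤ × ℤ) :
    normOrdγγβ β γ n pq w = 0 := by
  unfold normOrdγγβ
  split_ifs with hr
  · rw [Module.End.mul_apply, hwβ _ hr, map_zero]
  · simp only [Module.End.mul_apply]
    by_cases hq : 1 ≤ pq.2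
    · rw [hwγ _ hq, map_zero, map_zero]
    · rw [(h.commute_γ_γ pq.1 pq.2).apply_comm, hwγ pq.1 (by omega), map_zero, map_zero]

section Current0

variable {κ : ℂ} {J0 : ℤ → Module.End ℂ M}
  (hJ0 : ∀ n v, J0 n v = κ • a n v + ∑ᶠ q, normOrdγβ β γ n q v)
include hJ0

theorem lie_J0_β (n r : ℤ) : ⁅J0 n, β r⁆ = β (n + r) := by
  ext v
  have hsum := (β r).lie_finsum_apply (normOrdγβ β γ n) v (h.hasFiniteSupport_normOrdγβ n v)
    (h.hasFiniteSupport_normOrdγβ n (β r v))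
  simp only [h.lie_β_normOrdγβ, LinearMap.neg_apply, DFunLike.ite_apply, LinearMap.zero_apply,
    finsum_neg_distrib, finsum_ite_eq] at hsum
  rw [Module.End.lie_apply_eq_sub, hJ0, hJ0, map_add, map_smul, (h.commute_a_β n r).apply_comm]
  linear_combination (norm := module) -hsum

theorem lie_J0_γ (n x : ℤ) : ⁅J0 n, γ x⁆ = -γ (n + x) := by
  ext v
  have hsum := (γ x).lie_finsum_apply (normOrdγβ β γ n) v (h.hasFiniteSupport_normOrdγβ n v)
    (h.hasFiniteSupport_normOrdγβ n (γ x v))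
  simp only [h.lie_γ_normOrdγβ, DFunLike.ite_apply, LinearMap.zero_apply, finsum_ite_eq] at hsum
  rw [Module.End.lie_apply_eq_sub, hJ0, hJ0, map_add, map_smul, (h.commute_a_γ n x).apply_comm,
    LinearMap.neg_apply]
  linear_combination (norm := module) -hsum

theorem lie_J0_a (n x : ℤ) : ⁅J0 n, a x⁆ = κ • ⁅a n, a x⁆ := by
  ext v
  have hsum : a x (∑ᶠ q, normOrdγβ β γ n q v) = ∑ᶠ q, normOrdγβ β γ n q (a x v) := by
    rw [map_finsum _ (h.hasFiniteSupport_normOrdγβ n v)]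
    exact finsum_congr fun q => (h.commute_a_normOrdγβ x n q).apply_comm v
  rw [LinearMap.smul_apply, Module.End.lie_apply_eq_sub, Module.End.lie_apply_eq_sub, hJ0, hJ0,
    map_add, map_smul, hsum]
  module

theorem lie_J0_normOrdγβ (n m q : ℤ) :
    ⁅J0 n, normOrdγβ β γ m q⁆ = normOrdγβ β γ (n + m) q - normOrdγβ β γ (n + m) (q - n)
      + stepDiff 0 (-n) (-q) • if n + m = 0 then 1 else 0 := by
  rw [h.normOrdγβ_eq m q, lie_sub, Ring.lie_mul, h.lie_J0_γ hJ0, h.lie_J0_β hJ0,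
    Ring.lie_ite_one_zero, sub_zero, h.normOrdγβ_eq, h.normOrdγβ_eq,
    show n + -q = -(q - n) by ring, show n + m + (q - n) = m + q by ring,
    show n + (m + q) = n + m + q by ring]
  unfold stepDiff
  split_ifs <;> first | omega | (simp; abel)

theorem lie_J0_finsum_normOrdγβ (n m : ℤ) (v : M) :
    J0 n (∑ᶠ q, normOrdγβ β γ m q v) - ∑ᶠ q, normOrdγβ β γ m q (J0 n v)
      = -(n : ℂ) • (if n + m = 0 then 1 else 0 : Module.End ℂ M) v := by
  have hT := h.hasFiniteSupport_normOrdγβ (n + m) v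
  have hT' : HasFiniteSupport fun q => normOrdγβ β γ (n + m) (q - n) v :=
    hT.comp_of_injective (sub_left_injective (b := n))
  have hc : HasFiniteSupport fun q => stepDiff 0 (-n) (-q) :=
    (hasFiniteSupport_stepDiff 0 (-n)).comp_of_injective neg_injective
  rw [(J0 n).lie_finsum_apply _ v (h.hasFiniteSupport_normOrdγβ m v)
    (h.hasFiniteSupport_normOrdγβ m _)]
  simp only [h.lie_J0_normOrdγβ hJ0, LinearMap.add_apply, LinearMap.sub_apply,
    LinearMap.smul_apply]
  rw [finsum_add_distrib (hT.fun_sub hT') (hc.fun_smul_left _), finsum_sub_distrib hT hT',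
    finsum_comp_sub_right (fun q => normOrdγβ β γ (n + m) q v), sub_self, zero_add,
    ← finsum_smul, finsum_comp_neg (stepDiff 0 (-n)), finsum_stepDiff]
  push_cast
  rw [sub_zero]

theorem lie_J0_J0 (n m : ℤ) :
    ⁅J0 n, J0 m⁆ = (if n + m = 0 then (n : ℂ) * (κ ^ 2 - 2) / 2 else 0) • 1 := by
  ext v
  have hsum := h.lie_J0_finsum_normOrdγβ hJ0 n m v
  have ha := congr($(h.lie_J0_a hJ0 n m) v)
  rw [Module.End.lie_apply_eq_sub] at ha
  rw [Module.End.lie_apply_eq_sub, hJ0 m, hJ0 m, map_add, map_smul]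
  simp only [LinearMap.smul_apply, h.lie_a_a, Module.End.one_apply] at ha ⊢
  split_ifs at ha hsum ⊢ <;> simp only [LinearMap.zero_apply, Module.End.one_apply] at hsum <;>
    linear_combination (norm := module) κ • ha + hsum

theorem lie_J0_γ_mul_a (n m q : ℤ) :
    ⁅J0 n, γ (m - q) * a q⁆
      = -(γ (n + m - q) * a q) + if q = -n then (κ * n / 2) • γ (n + m) else 0 := by
  rw [Ring.lie_mul, h.lie_J0_γ hJ0, h.lie_J0_a hJ0, h.lie_a_a, neg_mul,
    show n + (m - q) = n + m - q by ring]
  by_cases hq : q = -n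
  · subst hq
    rw [if_pos (by ring), if_pos rfl, show m - -n = n + m by ring, mul_smul_comm, mul_smul_comm,
      mul_one, smul_smul, mul_div_assoc]
  · rw [if_neg (by omega), if_neg hq]
    simp

theorem lie_J0_normOrdγγβ (n m : ℤ) (pq : ℤ × ℤ) :
    ⁅J0 n, normOrdγγβ β γ m pq⁆ = normOrdγγβ β γ (n + m) pq
      - normOrdγγβ β γ (n + m) (pq.1 + n, pq.2) - normOrdγγβ β γ (n + m) (pq.1, pq.2 + n)
      + ((if pq.1 = n + m then stepDiff 0 (-n) pq.2 else 0)
        + if pq.2 = n + m then stepDiff 0 (-n) pq.1 else 0) • γ (n + m) := by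
  obtain ⟨p, q⟩ := pq
  -- the reordering remainders of the four monomials involved
  have hcoeff : ((if p = n + m ∧ 0 < q then 1 else 0) + if q = n + m ∧ 0 < p then 1 else 0 : ℂ)
        - ((if p + n = n + m ∧ 0 < q then 1 else 0) + if q = n + m ∧ 0 < p + n then 1 else 0)
        - ((if p = n + m ∧ 0 < q + n then 1 else 0) + if q + n = n + m ∧ 0 < p then 1 else 0)
        + ((if p = m ∧ 0 < q then 1 else 0) + if q = m ∧ 0 < p then 1 else 0)
      = (if p = n + m then stepDiff 0 (-n) q else 0)
        + if q = n + m then stepDiff 0 (-n) p else 0 := by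
    simp only [show p + n = n + m ↔ p = m by omega, show q + n = n + m ↔ q = m by omega,
      show 0 < q + n ↔ -n < q by omega, show 0 < p + n ↔ -n < p by omega, stepDiff]
    by_cases hp : p = n + m <;> by_cases hq : q = n + m <;>
      simp only [hp, hq, if_true, if_false, true_and, false_and] <;> ring
  dsimp only
  rw [h.normOrdγγβ_eq, lie_sub, Ring.lie_mul, Ring.lie_mul, lie_smul, h.lie_J0_γ hJ0,
    h.lie_J0_γ hJ0, h.lie_J0_γ hJ0, h.lie_J0_β hJ0, h.normOrdγγβ_eq, h.normOrdγγβ_eq,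
    h.normOrdγγβ_eq, show n + m - (p + n) - q = m - p - q by ring,
    show n + m - p - (q + n) = m - p - q by ring, show n + (m - p - q) = n + m - p - q by ring,
    add_comm n p, add_comm n q]
  simp only [add_mul, neg_mul, mul_neg]
  linear_combination (norm := module) hcoeff • γ (n + m)

theorem lie_J0_finsum_γ_mul_a (n m : ℤ) (v : M) :
    J0 n (∑ᶠ q, (γ (m - q) * a q) v) - ∑ᶠ q, (γ (m - q) * a q) (J0 n v)
      = -∑ᶠ q, (γ (n + m - q) * a q) v + (κ * n / 2) • γ (n + m) v := by
  rw [(J0 n).lie_finsum_apply _ v (h.hasFiniteSupport_γ_mul_a m v)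
    (h.hasFiniteSupport_γ_mul_a m _)]
  simp only [h.lie_J0_γ_mul_a hJ0, LinearMap.add_apply, LinearMap.neg_apply, DFunLike.ite_apply,
    LinearMap.zero_apply]
  rw [finsum_add_distrib (h.hasFiniteSupport_γ_mul_a (n + m) v).fun_neg
    (hasFiniteSupport_ite_eq _ _), finsum_neg_distrib, finsum_ite_eq, LinearMap.smul_apply]

theorem lie_J0_finsum_normOrdγγβ (n m : ℤ) (v : M) :
    J0 n (∑ᶠ pq, normOrdγγβ β γ m pq v) - ∑ᶠ pq, normOrdγγβ β γ m pq (J0 n v)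
      = -∑ᶠ pq, normOrdγγβ β γ (n + m) pq v - (2 * n : ℂ) • γ (n + m) v := by
  let e₁ := (Equiv.addRight n).prodCongr (Equiv.refl ℤ)
  let e₂ := (Equiv.refl ℤ).prodCongr (Equiv.addRight n)
  have hT := h.hasFiniteSupport_normOrdγγβ (n + m) v
  have hT₁ : HasFiniteSupport fun pq : ℤ × ℤ => normOrdγγβ β γ (n + m) (pq.1 + n, pq.2) v :=
    hT.comp_of_injective e₁.injective
  have hT₂ : HasFiniteSupport fun pq : ℤ × ℤ => normOrdγγβ β γ (n + m) (pq.1, pq.2 + n) v :=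
    hT.comp_of_injective e₂.injective
  have hshift₁ : ∑ᶠ pq : ℤ × ℤ, normOrdγγβ β γ (n + m) (pq.1 + n, pq.2) v
      = ∑ᶠ pq, normOrdγγβ β γ (n + m) pq v :=
    finsum_comp_equiv e₁ (f := fun pq => normOrdγγβ β γ (n + m) pq v)
  have hshift₂ : ∑ᶠ pq : ℤ × ℤ, normOrdγγβ β γ (n + m) (pq.1, pq.2 + n) v
      = ∑ᶠ pq, normOrdγγβ β γ (n + m) pq v :=
    finsum_comp_equiv e₂ (f := fun pq => normOrdγγβ β γ (n + m) pq v)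
  have hline := (hasFiniteSupport_stepDiff 0 (-n)).fun_smul_left fun _ => γ (n + m) v
  rw [(J0 n).lie_finsum_apply _ v (h.hasFiniteSupport_normOrdγγβ m v)
    (h.hasFiniteSupport_normOrdγγβ m _)]
  simp only [h.lie_J0_normOrdγγβ hJ0, LinearMap.add_apply, LinearMap.sub_apply, add_smul,
    ite_smul, zero_smul, DFunLike.ite_apply, LinearMap.smul_apply, LinearMap.zero_apply]
  rw [finsum_add_distrib ((hT.fun_sub hT₁).fun_sub hT₂)
      (hasFiniteSupport_prod_ite_add_ite (n + m) hline),
    finsum_sub_distrib (hT.fun_sub hT₁) hT₂, finsum_sub_distrib hT hT₁, hshift₁, hshift₂,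
    finsum_prod_ite_add_ite (n + m) hline, ← finsum_smul, finsum_stepDiff]
  push_cast
  module

variable {Jm : ℤ → Module.End ℂ M}
  (hJm : ∀ n v, Jm n v = -(∑ᶠ pq, normOrdγγβ β γ n pq v)
    - (2 * κ) • ∑ᶠ q, (γ (n - q) * a q) v + ((κ ^ 2 - 2) * n) • γ n v)
include hJm

theorem lie_J0_Jm (n m : ℤ) : ⁅J0 n, Jm m⁆ = -Jm (n + m) := by
  ext v
  have hC := h.lie_J0_finsum_normOrdγγβ hJ0 n m v
  have hG := h.lie_J0_finsum_γ_mul_a hJ0 n m v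
  have hγ := congr($(h.lie_J0_γ hJ0 n m) v)
  rw [Module.End.lie_apply_eq_sub, LinearMap.neg_apply] at hγ
  rw [Module.End.lie_apply_eq_sub, LinearMap.neg_apply, hJm m v, hJm m (J0 n v), hJm (n + m) v,
    map_add, map_sub, map_neg, map_smul, map_smul]
  push_cast
  linear_combination (norm := module) -hC - (2 * κ) • hG + ((κ ^ 2 - 2) * m) • hγ

theorem lie_β_Jm (x m : ℤ) :
    ⁅β x, Jm m⁆ = 2 • J0 (x + m) + (if x + m = 0 then (x : ℂ) * (κ ^ 2 - 2) else 0) • 1 := by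
  ext v
  have hC := h.lie_β_finsum_normOrdγγβ x m v
  have hG := h.lie_β_finsum_γ_mul_a x m v
  have hγ := congr($(h.lie_β_γ x m) v)
  rw [Module.End.lie_apply_eq_sub, LinearMap.neg_apply] at hγ
  rw [Module.End.lie_apply_eq_sub, hJm m v, hJm m (β x v), map_add, map_sub, map_neg, map_smul,
    map_smul]
  simp only [LinearMap.add_apply, LinearMap.smul_apply, Module.End.one_apply, hJ0]
  by_cases hxm : x + m = 0
  · obtain rfl : m = -x := by omega
    simp only [neg_add_cancel, add_neg_cancel, if_true, Module.End.one_apply] at hC hG hγ ⊢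
    push_cast
    linear_combination (norm := module) -hC - (2 * κ) • hG + ((κ ^ 2 - 2) * -x) • hγ
  · simp only [show m + x ≠ 0 by omega, hxm, if_false, LinearMap.zero_apply] at hγ ⊢
    linear_combination (norm := module) -hC - (2 * κ) • hG + ((κ ^ 2 - 2) * m) • hγ

end Current0

end IsFreeFieldRep

end FreeFieldRep

theorem stmt7_general (M : Type*) [AddCommGroup M] [Module ℂ M]
    (κ j : ℂ) (hκ : κ ≠ 0) (k : ℂ) (hk : k = κ ^ 2 - 2)
    (a β γ : ℤ → Module.End ℂ M)
    (hγβ : ∀ m n : ℤ, γ m * β n - β n * γ m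
      = if m + n = 0 then (1 : Module.End ℂ M) else 0)
    (haa : ∀ m n : ℤ, a m * a n - a n * a m
      = (if m + n = 0 then (m : ℂ) / 2 else 0) • (1 : Module.End ℂ M))
    (haβ : ∀ m n : ℤ, a m * β n = β n * a m)
    (haγ : ∀ m n : ℤ, a m * γ n = γ n * a m)
    (hββ : ∀ m n : ℤ, β m * β n = β n * β m)
    (hγγ : ∀ m n : ℤ, γ m * γ n = γ n * γ m)
    (hloc : ∀ v : M, ∃ N : ℤ, ∀ n : ℤ, N ≤ n → a n v = 0 ∧ β n v = 0 ∧ γ n v = 0)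
    (w : M)
    (hwa : a 0 w = (κ⁻¹ * j) • w)
    (hwβ : ∀ n : ℤ, 0 ≤ n → β n w = 0)
    (hwγ : ∀ n : ℤ, 1 ≤ n → γ n w = 0)
    (hwa' : ∀ n : ℤ, 1 ≤ n → a n w = 0)
    (Jp Jm J0 : ℤ → Module.End ℂ M)
    (hJp : ∀ n : ℤ, Jp n = β n)
    (hJ0 : ∀ (n : ℤ) (v : M), J0 n v = κ • a n v +
      ∑ᶠ m : ℤ, (if 0 ≤ n + m then γ (-m) (β (n + m) v) else β (n + m) (γ (-m) v)))
    (hJm : ∀ (n : ℤ) (v : M), Jm n v =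
      -(∑ᶠ pq : ℤ × ℤ,
          (if 0 ≤ n - pq.1 - pq.2 then γ pq.1 (γ pq.2 (β (n - pq.1 - pq.2) v))
           else β (n - pq.1 - pq.2) (γ pq.1 (γ pq.2 v))))
      - (2 * κ) • (∑ᶠ m : ℤ, (if 1 ≤ m then γ (n - m) (a m v) else a m (γ (n - m) v)))
      + (k * n) • γ n v) :
    (∀ n m : ℤ, J0 n * Jp m - Jp m * J0 n = Jp (n + m)) ∧
    (∀ n m : ℤ, J0 n * Jm m - Jm m * J0 n = -Jm (n + m)) ∧
    (∀ n m : ℤ, Jp n * Jm m - Jm m * Jp n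
      = 2 • J0 (n + m) + (if n + m = 0 then (n : ℂ) * k else 0) • (1 : Module.End ℂ M)) ∧
    (∀ n m : ℤ, J0 n * J0 m - J0 m * J0 n
      = (if n + m = 0 then (n : ℂ) * k / 2 else 0) • (1 : Module.End ℂ M)) ∧
    J0 0 w = j • w ∧ Jp 0 w = 0 ∧
    (∀ n : ℤ, 1 ≤ n → Jp n w = 0 ∧ Jm n w = 0 ∧ J0 n w = 0) := by
  subst hk
  have h : IsFreeFieldRep a β γ := ⟨hγβ, haa, haβ, haγ, hββ, hγγ, hloc⟩
  have hJ0' : ∀ n v, J0 n v = κ • a n v + ∑ᶠ q, normOrdγβ β γ n q v := by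
    simpa only [normOrdγβ, DFunLike.ite_apply, Module.End.mul_apply] using hJ0
  have hγa : ∀ n q v, (if 1 ≤ q then γ (n - q) (a q v) else a q (γ (n - q) v))
      = (γ (n - q) * a q) v := fun n q v => by
    rw [(h.commute_a_γ q (n - q)).apply_comm, ite_self, Module.End.mul_apply]
  have hJm' : ∀ n v, Jm n v = -(∑ᶠ pq, normOrdγγβ β γ n pq v)
      - (2 * κ) • ∑ᶠ q, (γ (n - q) * a q) v + ((κ ^ 2 - 2) * n) • γ n v := by
    simpa only [normOrdγγβ, hγa, DFunLike.ite_apply, Module.End.mul_apply] using hJm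
  have hJ0w : ∀ n, 0 ≤ n → J0 n w = κ • a n w := fun n hn => by
    rw [hJ0', finsum_eq_zero_of_forall_eq_zero (normOrdγβ_apply_eq_zero hwβ hwγ hn), add_zero]
  refine ⟨fun n m => ?_, fun n m => ?_, fun n m => ?_, fun n m => ?_, ?_, hJp 0 ▸ hwβ 0 le_rfl,
    fun n hn => ⟨hJp n ▸ hwβ n (by omega), ?_, ?_⟩⟩
  · rw [hJp, hJp, ← Ring.lie_def, h.lie_J0_β hJ0']
  · rw [← Ring.lie_def, h.lie_J0_Jm hJ0' hJm']
  · rw [hJp, ← Ring.lie_def, h.lie_β_Jm hJ0' hJm']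
  · rw [← Ring.lie_def, h.lie_J0_J0 hJ0']
  · rw [hJ0w 0 le_rfl, hwa, smul_smul, mul_inv_cancel_left₀ hκ]
  · rw [hJm', finsum_eq_zero_of_forall_eq_zero (h.normOrdγγβ_apply_eq_zero hwβ hwγ hn),
      finsum_eq_zero_of_forall_eq_zero (h.γ_mul_a_apply_eq_zero hwγ hwa' hn), hwγ n hn]
    simp
  · rw [hJ0w n (by omega), hwa' n hn, smul_zero]

/-- the Wakimoto free-field construction.  On a module `M` carrying the
Heisenberg/βγ oscillator algebra `𝔴` (with `[γ_m, β_n] = δ_{m+n}`,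
`[a_m, a_n] = (m/2)·δ_{m+n}` and all other commutators zero), with a vacuum `w`
annihilated by `β_n (n ≥ 0)`, `γ_n, a_n (n ≥ 1)` and `a₀ w = κ⁻¹ j · w`, the operators

  `J⁺_n = β_n`,  `J⁰_n = ∑_m :γ_{−m} β_{n+m}: + κ a_n`,
  `J⁻_n = −(:γ²β:)_n − 2κ (:γ∂φ:)_n − k(∂γ)_n`   (with `k = κ² − 2`)

satisfy the affine `sl₂`-hat relations at level `k`, and `w` is a highest weight
vector: `J⁰₀ w = j·w`, `J⁺₀ w = 0`, and `J^a_n w = 0` for all `n > 0`. -/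
theorem stmt7 (M : Type*) [AddCommGroup M] [Module ℂ M]
    (κ j : ℂ) (hκ : κ ≠ 0) (k : ℂ) (hk : k = κ ^ 2 - 2)
    (a β γ : ℤ → Module.End ℂ M)
    (hγβ : ∀ m n : ℤ, γ m * β n - β n * γ m
      = if m + n = 0 then (1 : Module.End ℂ M) else 0)
    (haa : ∀ m n : ℤ, a m * a n - a n * a m
      = (if m + n = 0 then (m : ℂ) / 2 else 0) • (1 : Module.End ℂ M))
    (haβ : ∀ m n : ℤ, a m * β n = β n * a m)
    (haγ : ∀ m n : ℤ, a m * γ n = γ n * a m)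
    (hββ : ∀ m n : ℤ, β m * β n = β n * β m)
    (hγγ : ∀ m n : ℤ, γ m * γ n = γ n * γ m)
    (hloc : ∀ v : M, ∃ N : ℤ, ∀ n : ℤ, N ≤ n → a n v = 0 ∧ β n v = 0 ∧ γ n v = 0)
    (w : M) (hw0 : w ≠ 0)
    (hwa : a 0 w = (κ⁻¹ * j) • w)
    (hwβ : ∀ n : ℤ, 0 ≤ n → β n w = 0)
    (hwγ : ∀ n : ℤ, 1 ≤ n → γ n w = 0)
    (hwa' : ∀ n : ℤ, 1 ≤ n → a n w = 0)
    (Jp Jm J0 : ℤ → Module.End ℂ M)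
    (hJp : ∀ n : ℤ, Jp n = β n)
    (hJ0 : ∀ (n : ℤ) (v : M), J0 n v = κ • a n v +
      ∑ᶠ m : ℤ, (if 0 ≤ n + m then γ (-m) (β (n + m) v) else β (n + m) (γ (-m) v)))
    (hJm : ∀ (n : ℤ) (v : M), Jm n v =
      -(∑ᶠ pq : ℤ × ℤ,
          (if 0 ≤ n - pq.1 - pq.2 then γ pq.1 (γ pq.2 (β (n - pq.1 - pq.2) v))
           else β (n - pq.1 - pq.2) (γ pq.1 (γ pq.2 v))))
      - (2 * κ) • (∑ᶠ m : ℤ, (if 1 ≤ m then γ (n - m) (a m v) else a m (γ (n - m) v)))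
      + (k * n) • γ n v) :
    (∀ n m : ℤ, J0 n * Jp m - Jp m * J0 n = Jp (n + m)) ∧
    (∀ n m : ℤ, J0 n * Jm m - Jm m * J0 n = -Jm (n + m)) ∧
    (∀ n m : ℤ, Jp n * Jm m - Jm m * Jp n
      = 2 • J0 (n + m) + (if n + m = 0 then (n : ℂ) * k else 0) • (1 : Module.End ℂ M)) ∧
    (∀ n m : ℤ, J0 n * J0 m - J0 m * J0 n
      = (if n + m = 0 then (n : ℂ) * k / 2 else 0) • (1 : Module.End ℂ M)) ∧
    J0 0 w = j • w ∧ Jp 0 w = 0 ∧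
    (∀ n : ℤ, 1 ≤ n → Jp n w = 0 ∧ Jm n w = 0 ∧ J0 n w = 0) :=
  stmt7_general M κ j hκ k hk a β γ hγβ haa haβ haγ hββ hγγ hloc w hwa hwβ hwγ hwa' Jp Jm J0 hJp hJ0
    hJm
end

section
/- In the tensor product 𝒲^{κ,j} ⊗ ℱ of the Wakimoto module with the fermionic Fock space, the field ρ(z) = γ(z)²K⁺(z) − 2γ(z)K⁰(z) − K⁻(z) − ∂γ(z) factorizes as ρ(z) = χ(z)·χ̄(z), where χ(z) = ψ¹(z) − γ(z)ψ²(z) and χ̄(z) = ψ̄²(z) + γ(z)ψ̄¹(z); moreover the modes of χ and χ̄ pairwise anticommute: [χ_k, χ_l]₊ = [χ̄_k, χ_l]₊ = [χ̄_k, χ̄_l]₊ = 0 for all k, l ∈ ℤ + 1/2. In particular ρ_n² = 0 need not hold, but χ_k² = χ̄_k² = 0. -/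
/-!
Write `χ = ψ¹ - γψ²` and `χ̄ = ψ̄² + γψ̄¹`. As `γ` commutes with the fermions, anticommutators
with the modes of `γψⁱ` and `γψ̄ⁱ` are `γ`-weighted sums of fermionic ones: `{ψ̄²_r, (γψ²)_s}` and
`{ψ¹_r, (γψ̄¹)_s}` both equal `γ_{r+s-1}`, and all other anticommutators among `ψ¹`, `ψ̄²`, `γψ²`,
`γψ̄¹` vanish. The two `γ_{r+s-1}` cancel in `{χ̄_r, χ_s}`.

For the factorization, expand `χ_r χ̄_{n+1-r} v` and normal order the products `ψ¹ψ̄¹` and `ψ²ψ̄²`.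
After a change of summation variables the terms sum to `γ²K⁺ - 2γK⁰ - K⁻`, and the contractions
`([1 ≤ r] - [n + 1 ≤ r]) γ_n v` sum to `n γ_n v = -(∂γ)_n v`. Every sum is finite on a fixed
vector, since modes of large index annihilate it; this is what justifies the changes of variables.
-/

open Function

noncomputable section

namespace WakimotoFermion

section Finsum

variable {α β M : Type*} [AddCommMonoid M]

lemma hasFiniteSupport_finsum_snd {F : α × β → M}
    (hF : HasFiniteSupport F) : HasFiniteSupport fun a => ∑ᶠ b, F (a, b) := by
  refine (hF.image Prod.fst).subset fun a ha => ?_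
  by_contra h
  refine ha (finsum_eq_zero_of_forall_eq_zero fun b => ?_)
  by_contra hb
  exact h ⟨(a, b), hb, rfl⟩

lemma hasFiniteSupport_comp_prodMk {F : α × β → M} (hF : HasFiniteSupport F) (a : α) :
    HasFiniteSupport fun b => F (a, b) :=
  hF.comp_of_injective (Prod.mk_right_injective a)

def shearEquiv (c : ℤ) (f : β → ℤ) : ℤ × β ≃ β × ℤ where
  toFun y := (y.2, c - y.1 - f y.2)
  invFun z := (c - z.2 - f z.1, z.1)
  left_inv y := Prod.ext (by simp only; abel) rfl
  right_inv z := Prod.ext rfl (by simp only; abel)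

lemma hasFiniteSupport_shear {F : β × ℤ → M} (hF : HasFiniteSupport F) (c : ℤ) (f : β → ℤ) :
    HasFiniteSupport fun y : ℤ × β => F (y.2, c - y.1 - f y.2) :=
  hF.comp_of_injective (shearEquiv c f).injective

lemma hasFiniteSupport_finsum_shear {F : β × ℤ → M} (hF : HasFiniteSupport F) (c : ℤ)
    (f : β → ℤ) : HasFiniteSupport fun r : ℤ => ∑ᶠ x : β, F (x, c - r - f x) :=
  hasFiniteSupport_finsum_snd (hasFiniteSupport_shear hF c f)

lemma finsum_finsum_shear {F : β × ℤ → M} (hF : HasFiniteSupport F) (c : ℤ) (f : β → ℤ) :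
    ∑ᶠ (r : ℤ) (x : β), F (x, c - r - f x) = ∑ᶠ (x : β) (a : ℤ), F (x, a) := by
  rw [← finsum_curry _ (hasFiniteSupport_shear hF c f), ← finsum_curry _ hF]
  exact finsum_comp_equiv (shearEquiv c f)

end Finsum

lemma hasFiniteSupport_boole_sub_boole (n : ℤ) :
    HasFiniteSupport fun r : ℤ =>
      ((if 1 ≤ r then 1 else 0) - (if n + 1 - r ≤ 0 then 1 else 0) : ℤ) :=
  (Set.finite_Icc (-|n|) |n|).subset fun r hr => by
    simp only [mem_support] at hr
    have := le_abs_self n; have := neg_abs_le n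
    split_ifs at hr <;> simp only [Set.mem_Icc] <;> omega

lemma finsum_boole_sub_boole (n : ℤ) :
    ∑ᶠ r : ℤ, ((if 1 ≤ r then 1 else 0) - (if n + 1 - r ≤ 0 then 1 else 0) : ℤ) = n := by
  set g : ℤ → ℤ → ℤ := fun n r => (if 1 ≤ r then 1 else 0) - (if n + 1 - r ≤ 0 then 1 else 0)
  have hg : ∀ n, HasFiniteSupport (g n) := hasFiniteSupport_boole_sub_boole
  have hstep : ∀ n, ∑ᶠ r, g (n + 1) r = ∑ᶠ r, g n r + 1 := fun n => by
    have hδ : HasFiniteSupport fun r : ℤ => if r = n + 1 then (1 : ℤ) else 0 :=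
      (Set.finite_singleton (n + 1)).subset fun r hr => by
        simp only [mem_support, ne_eq, ite_eq_right_iff, Classical.not_imp] at hr
        exact hr.1
    have hsplit : g (n + 1) = fun r => g n r + if r = n + 1 then 1 else 0 := by
      funext r; simp only [g]; split_ifs <;> omega
    rw [hsplit, finsum_add_distrib (hg n) hδ, finsum_eq_single _ (n + 1) fun r hr => if_neg hr,
      if_pos rfl]
  change ∑ᶠ r, g n r = n
  induction n using Int.induction_on with
  | zero => exact finsum_eq_zero_of_forall_eq_zero fun r => by simp only [g]; split_ifs <;> omega
  | succ k ih => rw [hstep, ih]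
  | pred k ih => have := hstep (-(k : ℤ) - 1); rw [sub_add_cancel, ih] at this; linarith

section LocallyFiniteSum

variable {ι R M : Type*} [Semiring R] [AddCommMonoid M] [Module R M]

def locallyFiniteSum (f : ι → Module.End R M) (hf : ∀ w, HasFiniteSupport fun i => f i w) :
    Module.End R M where
  toFun w := ∑ᶠ i, f i w
  map_add' v w := by simp only [map_add]; exact finsum_add_distrib (hf v) (hf w)
  map_smul' c w := by simp only [map_smul]; exact (smul_finsum' c (hf w)).symm

variable (f : ι → Module.End R M) (hf : ∀ w, HasFiniteSupport fun i => f i w)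

lemma locallyFiniteSum_apply (w : M) : locallyFiniteSum f hf w = ∑ᶠ i, f i w := rfl

lemma commute_locallyFiniteSum {T : Module.End R M} (hT : ∀ i, Commute T (f i)) :
    Commute T (locallyFiniteSum f hf) := by
  ext w
  simp only [Module.End.mul_apply, locallyFiniteSum_apply]
  rw [map_finsum T (hf w)]
  exact finsum_congr fun i => LinearMap.congr_fun (hT i).eq w

lemma anticomm_locallyFiniteSum_apply (T : Module.End R M) (w : M) :
    (T * locallyFiniteSum f hf + locallyFiniteSum f hf * T) w
      = ∑ᶠ i, (T * f i + f i * T) w := by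
  simp only [LinearMap.add_apply, Module.End.mul_apply, locallyFiniteSum_apply]
  rw [map_finsum T (hf w), ← finsum_add_distrib ((hf w).fun_comp (map_zero T)) (hf (T w))]

end LocallyFiniteSum

/-- The fermionic mode `ψⁱ_{r - 1/2}` is indexed by `r : ℤ`, and `ψ i` is `ψ^{i+1}`. -/
structure Modes (M : Type*) [AddCommGroup M] [Module ℂ M] where
  ψ : Fin 2 → ℤ → Module.End ℂ M
  ψb : Fin 2 → ℤ → Module.End ℂ M
  γ : ℤ → Module.End ℂ M
  anticomm_ψ_ψb : ∀ (i j : Fin 2) (r s : ℤ),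
    ψ i r * ψb j s + ψb j s * ψ i r = if i = j ∧ r + s = 1 then 1 else 0
  anticomm_ψ_ψ : ∀ (i j : Fin 2) (r s : ℤ), ψ i r * ψ j s + ψ j s * ψ i r = 0
  anticomm_ψb_ψb : ∀ (i j : Fin 2) (r s : ℤ), ψb i r * ψb j s + ψb j s * ψb i r = 0
  commute_γ_γ : ∀ m n : ℤ, Commute (γ m) (γ n)
  commute_γ_ψ : ∀ (m : ℤ) (i : Fin 2) (r : ℤ), Commute (γ m) (ψ i r)
  commute_γ_ψb : ∀ (m : ℤ) (i : Fin 2) (r : ℤ), Commute (γ m) (ψb i r)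
  locality : ∀ v : M, ∃ N : ℤ, ∀ r : ℤ, N ≤ r →
    γ r v = 0 ∧ ∀ i : Fin 2, ψ i r v = 0 ∧ ψb i r v = 0

namespace Modes

variable {M : Type*} [AddCommGroup M] [Module ℂ M] (S : Modes M)

def Killed (N : ℤ) (v : M) : Prop :=
  ∀ r : ℤ, N ≤ r → S.γ r v = 0 ∧ ∀ i : Fin 2, S.ψ i r v = 0 ∧ S.ψb i r v = 0

lemma exists_killed (v : M) : ∃ N, 1 ≤ N ∧ S.Killed N v := by
  obtain ⟨N, hN⟩ := S.locality v
  exact ⟨max N 1, le_max_right _ _, fun r hr => hN r ((le_max_left _ _).trans hr)⟩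

section Killed

variable {S} {N : ℤ} {v : M} (hv : S.Killed N v)
include hv

lemma Killed.γ_apply_eq_zero {r : ℤ} (hr : N ≤ r) : S.γ r v = 0 := (hv r hr).1

lemma Killed.ψ_apply_eq_zero (i : Fin 2) {r : ℤ} (hr : N ≤ r) : S.ψ i r v = 0 := ((hv r hr).2 i).1

lemma Killed.ψb_apply_eq_zero (i : Fin 2) {r : ℤ} (hr : N ≤ r) : S.ψb i r v = 0 := ((hv r hr).2 i).2

end Killed

lemma ψ_mul_ψb (i j : Fin 2) (r s : ℤ) :
    S.ψ i r * S.ψb j s = (if i = j ∧ r + s = 1 then 1 else 0) - S.ψb j s * S.ψ i r :=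
  eq_sub_of_add_eq (S.anticomm_ψ_ψb i j r s)

lemma ψb_mul_ψ (i j : Fin 2) (r s : ℤ) :
    S.ψb j s * S.ψ i r = (if i = j ∧ r + s = 1 then 1 else 0) - S.ψ i r * S.ψb j s :=
  eq_sub_of_add_eq' (S.anticomm_ψ_ψb i j r s)

lemma ψb_mul_ψ_of_ne {i j : Fin 2} (hij : i ≠ j) (r s : ℤ) :
    S.ψb j s * S.ψ i r = -(S.ψ i r * S.ψb j s) := by
  rw [S.ψb_mul_ψ, if_neg (fun h => hij h.1), zero_sub]

lemma ψ_mul_ψb_of_ne {i j : Fin 2} (hij : i ≠ j) (r s : ℤ) :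
    S.ψ i r * S.ψb j s = -(S.ψb j s * S.ψ i r) := by
  rw [S.ψ_mul_ψb, if_neg (fun h => hij h.1), zero_sub]

lemma hasFiniteSupport_γ_mul {F : ℤ → Module.End ℂ M} (hF : ∀ m k, Commute (S.γ m) (F k))
    {N : ℤ} {w : M} (hw : ∀ k, N ≤ k → S.γ k w = 0 ∧ F k w = 0) (r : ℤ) :
    HasFiniteSupport fun m => S.γ m (F (r - m) w) :=
  (Set.finite_Ioo (r - N) N).subset <| support_subset_iff'.2 fun m hm => by
    simp only [Set.mem_Ioo, not_and_or, not_lt] at hm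
    rcases hm with h | h
    · rw [(hw _ (by omega)).2, map_zero]
    · rw [← Module.End.mul_apply, (hF m _).eq, Module.End.mul_apply, (hw m h).1, map_zero]

lemma hasFiniteSupport_γ_mul_ψ (i : Fin 2) (r : ℤ) (w : M) :
    HasFiniteSupport fun m => S.γ m (S.ψ i (r - m) w) := by
  obtain ⟨N, hN⟩ := S.locality w
  exact S.hasFiniteSupport_γ_mul (fun m k => S.commute_γ_ψ m i k)
    (fun k hk => ⟨(hN k hk).1, ((hN k hk).2 i).1⟩) r

lemma hasFiniteSupport_γ_mul_ψb (i : Fin 2) (r : ℤ) (w : M) :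
    HasFiniteSupport fun m => S.γ m (S.ψb i (r - m) w) := by
  obtain ⟨N, hN⟩ := S.locality w
  exact S.hasFiniteSupport_γ_mul (fun m k => S.commute_γ_ψb m i k)
    (fun k hk => ⟨(hN k hk).1, ((hN k hk).2 i).2⟩) r

def γψ (i : Fin 2) (r : ℤ) : Module.End ℂ M :=
  locallyFiniteSum (fun m => S.γ m * S.ψ i (r - m)) (S.hasFiniteSupport_γ_mul_ψ i r)

def γψb (i : Fin 2) (r : ℤ) : Module.End ℂ M :=
  locallyFiniteSum (fun m => S.γ m * S.ψb i (r - m)) (S.hasFiniteSupport_γ_mul_ψb i r)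

lemma γψ_apply (i : Fin 2) (r : ℤ) (w : M) : S.γψ i r w = ∑ᶠ m, S.γ m (S.ψ i (r - m) w) := rfl

lemma γψb_apply (i : Fin 2) (r : ℤ) (w : M) : S.γψb i r w = ∑ᶠ m, S.γ m (S.ψb i (r - m) w) := rfl

lemma commute_γ_γψ (m : ℤ) (i : Fin 2) (r : ℤ) : Commute (S.γ m) (S.γψ i r) :=
  commute_locallyFiniteSum _ _ fun k => (S.commute_γ_γ m k).mul_right (S.commute_γ_ψ m i _)

lemma commute_γ_γψb (m : ℤ) (i : Fin 2) (r : ℤ) : Commute (S.γ m) (S.γψb i r) :=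
  commute_locallyFiniteSum _ _ fun k => (S.commute_γ_γ m k).mul_right (S.commute_γ_ψb m i _)

lemma anticomm_locallyFiniteSum_γ_mul_apply {T : Module.End ℂ M} (hT : ∀ m, Commute T (S.γ m))
    (F : ℤ → Module.End ℂ M) {r : ℤ} (hF : ∀ w, HasFiniteSupport fun m => (S.γ m * F (r - m)) w)
    (w : M) :
    (T * locallyFiniteSum (fun m => S.γ m * F (r - m)) hF
      + locallyFiniteSum (fun m => S.γ m * F (r - m)) hF * T) w
      = ∑ᶠ m, S.γ m ((T * F (r - m) + F (r - m) * T) w) := by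
  rw [anticomm_locallyFiniteSum_apply]
  refine finsum_congr fun m => ?_
  rw [← mul_assoc, (hT m).eq, mul_assoc, mul_assoc, ← mul_add, Module.End.mul_apply]

lemma anticomm_locallyFiniteSum_γ_mul_eq_zero {T : Module.End ℂ M}
    (hT : ∀ m, Commute T (S.γ m)) {F : ℤ → Module.End ℂ M} (hTF : ∀ k, T * F k + F k * T = 0)
    {r : ℤ} (hF : ∀ w, HasFiniteSupport fun m => (S.γ m * F (r - m)) w) :
    T * locallyFiniteSum (fun m => S.γ m * F (r - m)) hF
      + locallyFiniteSum (fun m => S.γ m * F (r - m)) hF * T = 0 := by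
  ext w
  rw [S.anticomm_locallyFiniteSum_γ_mul_apply hT]
  simp [hTF]

lemma anticomm_locallyFiniteSum_γ_mul_eq_γ {T : Module.End ℂ M}
    (hT : ∀ m, Commute T (S.γ m)) {F : ℤ → Module.End ℂ M} {c : ℤ}
    (hTF : ∀ k, T * F k + F k * T = if k = c then 1 else 0)
    {r : ℤ} (hF : ∀ w, HasFiniteSupport fun m => (S.γ m * F (r - m)) w) :
    T * locallyFiniteSum (fun m => S.γ m * F (r - m)) hF
      + locallyFiniteSum (fun m => S.γ m * F (r - m)) hF * T = S.γ (r - c) := by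
  ext w
  rw [S.anticomm_locallyFiniteSum_γ_mul_apply hT, finsum_eq_single _ (r - c) fun m hm => ?_]
  · simp [hTF]
  · simp [hTF, show r - m ≠ c by omega]

lemma anticomm_ψ_γψ (i j : Fin 2) (r s : ℤ) : S.ψ i r * S.γψ j s + S.γψ j s * S.ψ i r = 0 :=
  S.anticomm_locallyFiniteSum_γ_mul_eq_zero (fun m => (S.commute_γ_ψ m i r).symm)
    (fun k => S.anticomm_ψ_ψ i j r k) _

lemma anticomm_ψb_γψb (i j : Fin 2) (r s : ℤ) : S.ψb i r * S.γψb j s + S.γψb j s * S.ψb i r = 0 :=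
  S.anticomm_locallyFiniteSum_γ_mul_eq_zero (fun m => (S.commute_γ_ψb m i r).symm)
    (fun k => S.anticomm_ψb_ψb i j r k) _

lemma anticomm_ψb_γψ (i : Fin 2) (r s : ℤ) :
    S.ψb i r * S.γψ i s + S.γψ i s * S.ψb i r = S.γ (r + s - 1) := by
  rw [show r + s - 1 = s - (1 - r) by ring]
  refine S.anticomm_locallyFiniteSum_γ_mul_eq_γ (fun m => (S.commute_γ_ψb m i r).symm)
    (fun k => ?_) _
  rw [add_comm, S.anticomm_ψ_ψb]
  exact if_congr (by omega) rfl rfl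

lemma anticomm_ψ_γψb (i : Fin 2) (r s : ℤ) :
    S.ψ i r * S.γψb i s + S.γψb i s * S.ψ i r = S.γ (r + s - 1) := by
  rw [show r + s - 1 = s - (1 - r) by ring]
  refine S.anticomm_locallyFiniteSum_γ_mul_eq_γ (fun m => (S.commute_γ_ψ m i r).symm)
    (fun k => ?_) _
  rw [S.anticomm_ψ_ψb]
  exact if_congr (by omega) rfl rfl

lemma anticomm_ψ_γψb_of_ne {i j : Fin 2} (hij : i ≠ j) (r s : ℤ) :
    S.ψ i r * S.γψb j s + S.γψb j s * S.ψ i r = 0 :=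
  S.anticomm_locallyFiniteSum_γ_mul_eq_zero (fun m => (S.commute_γ_ψ m i r).symm)
    (fun k => by rw [S.anticomm_ψ_ψb, if_neg fun h => hij h.1]) _

lemma anticomm_γψ_γψ (i j : Fin 2) (r s : ℤ) : S.γψ i r * S.γψ j s + S.γψ j s * S.γψ i r = 0 :=
  S.anticomm_locallyFiniteSum_γ_mul_eq_zero (fun m => (S.commute_γ_γψ m i r).symm)
    (fun k => by rw [add_comm]; exact S.anticomm_ψ_γψ j i k r) _

lemma anticomm_γψb_γψb (i j : Fin 2) (r s : ℤ) :
    S.γψb i r * S.γψb j s + S.γψb j s * S.γψb i r = 0 :=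
  S.anticomm_locallyFiniteSum_γ_mul_eq_zero (fun m => (S.commute_γ_γψb m i r).symm)
    (fun k => by rw [add_comm]; exact S.anticomm_ψb_γψb j i k r) _

lemma anticomm_γψb_γψ_of_ne {i j : Fin 2} (hij : i ≠ j) (r s : ℤ) :
    S.γψb j r * S.γψ i s + S.γψ i s * S.γψb j r = 0 :=
  S.anticomm_locallyFiniteSum_γ_mul_eq_zero (fun m => (S.commute_γ_γψb m j r).symm)
    (fun k => by rw [add_comm]; exact S.anticomm_ψ_γψb_of_ne hij k r) _

def χ (r : ℤ) : Module.End ℂ M := S.ψ 0 r - S.γψ 1 r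

def χb (r : ℤ) : Module.End ℂ M := S.ψb 1 r + S.γψb 0 r

lemma anticomm_χ_χ (r s : ℤ) : S.χ r * S.χ s + S.χ s * S.χ r = 0 := by
  calc _ = (S.ψ 0 r * S.ψ 0 s + S.ψ 0 s * S.ψ 0 r)
        - (S.ψ 0 r * S.γψ 1 s + S.γψ 1 s * S.ψ 0 r)
        - (S.ψ 0 s * S.γψ 1 r + S.γψ 1 r * S.ψ 0 s)
        + (S.γψ 1 r * S.γψ 1 s + S.γψ 1 s * S.γψ 1 r) := by
        simp only [χ]; noncomm_ring
    _ = 0 := by simp only [anticomm_ψ_ψ, anticomm_ψ_γψ, anticomm_γψ_γψ]; simp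

lemma anticomm_χb_χb (r s : ℤ) : S.χb r * S.χb s + S.χb s * S.χb r = 0 := by
  calc _ = (S.ψb 1 r * S.ψb 1 s + S.ψb 1 s * S.ψb 1 r)
        + (S.ψb 1 r * S.γψb 0 s + S.γψb 0 s * S.ψb 1 r)
        + (S.ψb 1 s * S.γψb 0 r + S.γψb 0 r * S.ψb 1 s)
        + (S.γψb 0 r * S.γψb 0 s + S.γψb 0 s * S.γψb 0 r) := by
        simp only [χb]; noncomm_ring
    _ = 0 := by simp only [anticomm_ψb_ψb, anticomm_ψb_γψb, anticomm_γψb_γψb]; simp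

lemma anticomm_χb_χ (r s : ℤ) : S.χb r * S.χ s + S.χ s * S.χb r = 0 := by
  calc _ = (S.ψ 0 s * S.ψb 1 r + S.ψb 1 r * S.ψ 0 s)
        - (S.ψb 1 r * S.γψ 1 s + S.γψ 1 s * S.ψb 1 r)
        + (S.ψ 0 s * S.γψb 0 r + S.γψb 0 r * S.ψ 0 s)
        - (S.γψb 0 r * S.γψ 1 s + S.γψ 1 s * S.γψb 0 r) := by
        simp only [χ, χb]; noncomm_ring
    _ = 0 := by
        rw [S.anticomm_ψ_ψb, S.anticomm_ψb_γψ, S.anticomm_ψ_γψb,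
          S.anticomm_γψb_γψ_of_ne (by decide), if_neg fun h => absurd h.1 (by decide), add_comm s r]
        simp

/-- `:ψ̄ⁱ_a ψⁱ_b:`; the modes `ψⁱ_b` with `b ≥ 1` are the annihilation operators. -/
def normalOrder (i : Fin 2) (a b : ℤ) : Module.End ℂ M :=
  if 1 ≤ b then S.ψb i a * S.ψ i b else -(S.ψ i b * S.ψb i a)

lemma normalOrder_apply (i : Fin 2) (a b : ℤ) (v : M) :
    S.normalOrder i a b v
      = if 1 ≤ b then S.ψb i a (S.ψ i b v) else -(S.ψ i b (S.ψb i a v)) := by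
  unfold normalOrder
  split_ifs <;> rfl

lemma ψ_mul_ψb_eq_sub_normalOrder (i : Fin 2) (a b : ℤ) :
    S.ψ i b * S.ψb i a = (if 1 ≤ b ∧ a + b = 1 then 1 else 0) - S.normalOrder i a b := by
  by_cases hb : 1 ≤ b
  · rw [normalOrder, if_pos hb, S.ψ_mul_ψb]
    simp only [true_and, hb, add_comm b a]
  · rw [normalOrder, if_neg hb, if_neg fun h => hb h.1, zero_sub, neg_neg]

lemma commute_γ_normalOrder (m : ℤ) (i : Fin 2) (a b : ℤ) :
    Commute (S.γ m) (S.normalOrder i a b) := by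
  unfold normalOrder
  split_ifs
  · exact (S.commute_γ_ψb m i a).mul_right (S.commute_γ_ψ m i b)
  · exact ((S.commute_γ_ψ m i b).mul_right (S.commute_γ_ψb m i a)).neg_right

section Killed

variable {S} {N : ℤ} {v : M} (hv : S.Killed N v)
include hv

lemma Killed.γ_apply_eq_zero_of_commute {m : ℤ} (hm : N ≤ m) {T : Module.End ℂ M}
    (hT : Commute (S.γ m) T) : S.γ m (T v) = 0 := by
  rw [← Module.End.mul_apply, hT.eq, Module.End.mul_apply, hv.γ_apply_eq_zero hm, map_zero]

lemma Killed.normalOrder_apply_eq_zero (hN : 1 ≤ N) (i : Fin 2) {a b : ℤ} (h : N ≤ a ∨ N ≤ b) :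
    S.normalOrder i a b v = 0 := by
  unfold normalOrder
  split_ifs with hb
  · rcases h with ha | hb'
    · rw [S.ψb_mul_ψ, if_neg (by omega), zero_sub, LinearMap.neg_apply, Module.End.mul_apply,
        hv.ψb_apply_eq_zero i ha, map_zero, neg_zero]
    · rw [Module.End.mul_apply, hv.ψ_apply_eq_zero i hb', map_zero]
  · rw [LinearMap.neg_apply, Module.End.mul_apply, hv.ψb_apply_eq_zero i (by omega), map_zero,
      neg_zero]

lemma Killed.ψb_ψ_apply_eq_zero_of_ne {i j : Fin 2} (hij : i ≠ j) {a b : ℤ} (h : N ≤ a ∨ N ≤ b) :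
    S.ψb j a (S.ψ i b v) = 0 := by
  rcases h with ha | hb
  · rw [← Module.End.mul_apply, S.ψb_mul_ψ_of_ne hij, LinearMap.neg_apply, Module.End.mul_apply,
      hv.ψb_apply_eq_zero j ha, map_zero, neg_zero]
  · rw [hv.ψ_apply_eq_zero i hb, map_zero]

lemma Killed.γ_normalOrder_apply_eq_zero (hN : 1 ≤ N) (i : Fin 2) {p a b : ℤ}
    (h : N ≤ p ∨ N ≤ a ∨ N ≤ b) : S.γ p (S.normalOrder i a b v) = 0 := by
  rcases h with hp | h
  · exact hv.γ_apply_eq_zero_of_commute hp (S.commute_γ_normalOrder p i a b)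
  · rw [hv.normalOrder_apply_eq_zero hN i h, map_zero]

end Killed

lemma finsum_γ_ψ_ψb_apply (i : Fin 2) (a b : ℤ → ℤ) (v : M)
    (hfin : HasFiniteSupport fun m => S.γ m (S.normalOrder i (a m) (b m) v))
    {c : ℤ} (hc : ∀ m, a m + b m = 1 → m = c) :
    ∑ᶠ m, S.γ m (S.ψ i (b m) (S.ψb i (a m) v))
      = (if 1 ≤ b c ∧ a c + b c = 1 then S.γ c v else 0)
        - ∑ᶠ m, S.γ m (S.normalOrder i (a m) (b m) v) := by
  have hδ : ∀ m, m ≠ c →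
      S.γ m ((if 1 ≤ b m ∧ a m + b m = 1 then 1 else 0 : Module.End ℂ M) v) = 0 :=
    fun m hm => by rw [if_neg fun h => hm (hc m h.2)]; simp
  have hsingle : ∑ᶠ m, S.γ m ((if 1 ≤ b m ∧ a m + b m = 1 then 1 else 0 : Module.End ℂ M) v)
      = if 1 ≤ b c ∧ a c + b c = 1 then S.γ c v else 0 := by
    rw [finsum_eq_single _ c hδ]
    split_ifs <;> simp
  rw [← hsingle, ← finsum_sub_distrib
    ((Set.finite_singleton c).subset (support_subset_iff'.2 fun m hm => hδ m hm)) hfin]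
  refine finsum_congr fun m => ?_
  rw [← map_sub, ← LinearMap.sub_apply, ← S.ψ_mul_ψb_eq_sub_normalOrder, Module.End.mul_apply]

lemma ψ_γψb_apply (i : Fin 2) (r s : ℤ) (v : M) :
    S.ψ i r (S.γψb i s v)
      = (if 1 ≤ r then S.γ (r + s - 1) v else 0) - ∑ᶠ p, S.γ p (S.normalOrder i (s - p) r v) := by
  obtain ⟨N, hN, hv⟩ := S.exists_killed v
  have hfin : HasFiniteSupport fun p => S.γ p (S.normalOrder i (s - p) r v) :=
    (Set.finite_Ioo (s - N) N).subset <| support_subset_iff'.2 fun p hp =>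
      hv.γ_normalOrder_apply_eq_zero hN i (by simp only [Set.mem_Ioo] at hp; omega)
  rw [γψb_apply, map_finsum _ (S.hasFiniteSupport_γ_mul_ψb i s v)]
  simp_rw [← Module.End.mul_apply (S.ψ i r), ← (S.commute_γ_ψ _ i r).eq, Module.End.mul_apply]
  rw [S.finsum_γ_ψ_ψb_apply i (fun p => s - p) (fun _ => r) v hfin (c := r + s - 1) (by omega)]
  simp only [show s - (r + s - 1) + r = 1 by ring, and_true]

lemma γψ_ψb_apply (i : Fin 2) (r s : ℤ) (v : M) :
    S.γψ i r (S.ψb i s v)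
      = (if s ≤ 0 then S.γ (r + s - 1) v else 0) - ∑ᶠ m, S.γ m (S.normalOrder i s (r - m) v) := by
  obtain ⟨N, hN, hv⟩ := S.exists_killed v
  have hfin : HasFiniteSupport fun m => S.γ m (S.normalOrder i s (r - m) v) :=
    (Set.finite_Ioo (r - N) N).subset <| support_subset_iff'.2 fun m hm =>
      hv.γ_normalOrder_apply_eq_zero hN i (by simp only [Set.mem_Ioo] at hm; omega)
  rw [γψ_apply, S.finsum_γ_ψ_ψb_apply i (fun _ => s) (fun m => r - m) v hfin (c := r + s - 1)
    (by omega)]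
  simp only [show s + (r - (r + s - 1)) = 1 by ring, and_true,
    show 1 ≤ r - (r + s - 1) ↔ s ≤ 0 by omega]

lemma γψ_γψb_apply (r s : ℤ) (v : M) :
    S.γψ 1 r (S.γψb 0 s v)
      = -∑ᶠ m, ∑ᶠ p, S.γ m (S.γ p (S.ψb 0 (s - p) (S.ψ 1 (r - m) v))) := by
  rw [γψ_apply, ← finsum_neg_distrib]
  refine finsum_congr fun m => ?_
  rw [← Module.End.mul_apply (S.γ m), γψb_apply, map_finsum _ (S.hasFiniteSupport_γ_mul_ψb 0 s v),
    ← finsum_neg_distrib]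
  refine finsum_congr fun p => ?_
  rw [Module.End.mul_apply, ← Module.End.mul_apply (S.ψ 1 _), ← (S.commute_γ_ψ p 1 _).eq,
    Module.End.mul_apply, ← Module.End.mul_apply (S.ψ 1 _), S.ψ_mul_ψb_of_ne (by decide),
    LinearMap.neg_apply, map_neg, map_neg, Module.End.mul_apply]

lemma χ_χb_apply (r s : ℤ) (v : M) :
    S.χ r (S.χb s v)
      = ((if 1 ≤ r then 1 else 0) - (if s ≤ 0 then 1 else 0) : ℤ) • S.γ (r + s - 1) v
        - S.ψb 1 s (S.ψ 0 r v) - ∑ᶠ p, S.γ p (S.normalOrder 0 (s - p) r v)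
        + ∑ᶠ m, S.γ m (S.normalOrder 1 s (r - m) v)
        + ∑ᶠ m, ∑ᶠ p, S.γ m (S.γ p (S.ψb 0 (s - p) (S.ψ 1 (r - m) v))) := by
  rw [χ, χb, LinearMap.sub_apply, LinearMap.add_apply, map_add, map_add, S.ψ_γψb_apply,
    S.γψ_ψb_apply, S.γψ_γψb_apply, ← Module.End.mul_apply (S.ψ 0 r), S.ψ_mul_ψb_of_ne (by decide),
    LinearMap.neg_apply, Module.End.mul_apply]
  split_ifs <;> simp <;> abel

def γNormalOrderTerm (i : Fin 2) (n : ℤ) (v : M) (x : ℤ × ℤ) : M :=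
  S.γ x.1 (S.normalOrder i x.2 (n - x.1 + 1 - x.2) v)

def γγψbψTerm (n : ℤ) (v : M) (x : (ℤ × ℤ) × ℤ) : M :=
  S.γ x.1.1 (S.γ x.1.2 (S.ψb 0 x.2 (S.ψ 1 (n - x.1.1 - x.1.2 + 1 - x.2) v)))

section Killed

variable {S} {N : ℤ} {v : M} (hv : S.Killed N v)
include hv

lemma Killed.hasFiniteSupport_normalOrder (hN : 1 ≤ N) (i : Fin 2) (c : ℤ) :
    HasFiniteSupport fun a => S.normalOrder i a (c - a) v :=
  (Set.finite_Ioo (c - N) N).subset <| support_subset_iff'.2 fun a ha =>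
    hv.normalOrder_apply_eq_zero hN i (by simp only [Set.mem_Ioo] at ha; omega)

lemma Killed.hasFiniteSupport_ψb_ψ_of_ne {i j : Fin 2} (hij : i ≠ j) (c : ℤ) :
    HasFiniteSupport fun a => S.ψb j a (S.ψ i (c - a) v) :=
  (Set.finite_Ioo (c - N) N).subset <| support_subset_iff'.2 fun a ha =>
    hv.ψb_ψ_apply_eq_zero_of_ne hij (by simp only [Set.mem_Ioo] at ha; omega)

lemma Killed.hasFiniteSupport_γNormalOrderTerm (hN : 1 ≤ N) (i : Fin 2) (n : ℤ) :
    HasFiniteSupport (S.γNormalOrderTerm i n v) :=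
  ((Set.finite_Ioo (n + 1 - 2 * N) N).prod (Set.finite_Ioo (n + 1 - 2 * N) N)).subset <|
    support_subset_iff'.2 fun x hx => hv.γ_normalOrder_apply_eq_zero hN i (by
      simp only [Set.mem_prod, Set.mem_Ioo] at hx; omega)

lemma Killed.hasFiniteSupport_γγψbψTerm (n : ℤ) : HasFiniteSupport (S.γγψbψTerm n v) := by
  refine (((Set.finite_Ioo (n + 1 - 3 * N) N).prod (Set.finite_Ioo (n + 1 - 3 * N) N)).prod
    (Set.finite_Ioo (n + 1 - 3 * N) N)).subset <| support_subset_iff'.2 fun x hx => ?_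
  simp only [Set.mem_prod, Set.mem_Ioo, not_and_or, not_lt] at hx
  by_cases hm : N ≤ x.1.1
  · exact hv.γ_apply_eq_zero_of_commute hm <| (S.commute_γ_γ _ _).mul_right <|
      (S.commute_γ_ψb _ _ _).mul_right (S.commute_γ_ψ _ _ _)
  by_cases hp : N ≤ x.1.2
  · have h := hv.γ_apply_eq_zero_of_commute hp <| (S.commute_γ_ψb _ 0 x.2).mul_right
      (S.commute_γ_ψ _ 1 (n - x.1.1 - x.1.2 + 1 - x.2))
    rw [Module.End.mul_apply] at h
    rw [γγψbψTerm, h, map_zero]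
  rw [γγψbψTerm, hv.ψb_ψ_apply_eq_zero_of_ne (by decide) (by omega), map_zero, map_zero]

end Killed

-- The second indices are written as `n + 1 - r - f x`, the shape `finsum_finsum_shear` reindexes.
lemma χ_χb_apply_eq_terms (n r : ℤ) (v : M) :
    S.χ r (S.χb (n + 1 - r) v)
      = ((if 1 ≤ r then 1 else 0) - (if n + 1 - r ≤ 0 then 1 else 0) : ℤ) • S.γ n v
        - S.ψb 1 (n + 1 - r) (S.ψ 0 r v)
        - ∑ᶠ p, S.γNormalOrderTerm 0 n v (p, n + 1 - r - p)
        + ∑ᶠ m, S.γNormalOrderTerm 1 n v (m, n + 1 - r - 0)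
        + ∑ᶠ x, S.γγψbψTerm n v (x, n + 1 - r - x.2) := by
  obtain ⟨N, -, hv⟩ := S.exists_killed v
  have h₁ : ∀ p, n - p + 1 - (n + 1 - r - p) = r := fun p => by ring
  have h₂ : ∀ m, n - m + 1 - (n + 1 - r) = r - m := fun m => by ring
  have h₃ : ∀ m p, n - m - p + 1 - (n + 1 - r - p) = r - m := fun m p => by ring
  rw [S.χ_χb_apply, show r + (n + 1 - r) - 1 = n by ring, finsum_curry _ <|
    hasFiniteSupport_comp_prodMk (hasFiniteSupport_shear (hv.hasFiniteSupport_γγψbψTerm n) _ _) r]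
  simp only [γNormalOrderTerm, γγψbψTerm, sub_zero, h₁, h₂, h₃]

lemma finsum_χ_χb_apply_eq_finsum_terms (n : ℤ) (v : M) :
    ∑ᶠ r, S.χ r (S.χb (n + 1 - r) v)
      = (n : ℂ) • S.γ n v - ∑ᶠ r, S.ψb 1 (n + 1 - r) (S.ψ 0 r v)
        - ∑ᶠ (p) (a), S.γNormalOrderTerm 0 n v (p, a)
        + ∑ᶠ (p) (a), S.γNormalOrderTerm 1 n v (p, a)
        + ∑ᶠ (x) (a), S.γγψbψTerm n v (x, a) := by
  obtain ⟨N, hN, hv⟩ := S.exists_killed v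
  have hF := hv.hasFiniteSupport_γNormalOrderTerm hN
  have hG := hv.hasFiniteSupport_γγψbψTerm n
  have hc := hasFiniteSupport_boole_sub_boole n
  have hA : HasFiniteSupport fun r =>
      ((if 1 ≤ r then 1 else 0) - (if n + 1 - r ≤ 0 then 1 else 0) : ℤ) • S.γ n v :=
    hc.smul_left fun _ => S.γ n v
  have hB : HasFiniteSupport fun r => S.ψb 1 (n + 1 - r) (S.ψ 0 r v) :=
    (Set.finite_Ioo (n + 1 - N) N).subset <| support_subset_iff'.2 fun r hr =>
      hv.ψb_ψ_apply_eq_zero_of_ne (by decide) (by simp only [Set.mem_Ioo] at hr; omega)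
  have hC : HasFiniteSupport fun r => ∑ᶠ p, S.γNormalOrderTerm 0 n v (p, n + 1 - r - p) :=
    hasFiniteSupport_finsum_shear (hF 0 n) (n + 1) fun p => p
  have hD : HasFiniteSupport fun r => ∑ᶠ m, S.γNormalOrderTerm 1 n v (m, n + 1 - r - 0) :=
    hasFiniteSupport_finsum_shear (hF 1 n) (n + 1) fun _ => 0
  have hE : HasFiniteSupport fun r => ∑ᶠ x, S.γγψbψTerm n v (x, n + 1 - r - x.2) :=
    hasFiniteSupport_finsum_shear hG (n + 1) Prod.snd
  rw [finsum_congr (S.χ_χb_apply_eq_terms n · v),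
    finsum_add_distrib (((hA.fun_sub hB).fun_sub hC).fun_add hD) hE,
    finsum_add_distrib ((hA.fun_sub hB).fun_sub hC) hD, finsum_sub_distrib (hA.fun_sub hB) hC,
    finsum_sub_distrib hA hB, ← finsum_smul' hc, finsum_boole_sub_boole, Int.cast_smul_eq_zsmul,
    finsum_finsum_shear (hF 0 n) (n + 1) fun p => p,
    finsum_finsum_shear (hF 1 n) (n + 1) fun _ => 0, finsum_finsum_shear hG (n + 1) Prod.snd]

lemma finsum_ψb_ψ_reflect (i j : Fin 2) (c : ℤ) (v : M) :
    ∑ᶠ r, S.ψb j (c - r) (S.ψ i r v) = ∑ᶠ a, S.ψb j a (S.ψ i (c - a) v) := by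
  rw [← finsum_comp_equiv (Equiv.subLeft c)]
  simp only [Equiv.subLeft_apply, sub_sub_cancel]

lemma finsum_finsum_γNormalOrderTerm_sub (n : ℤ) (v : M) :
    ∑ᶠ (p) (a), S.γNormalOrderTerm 0 n v (p, a) - ∑ᶠ (p) (a), S.γNormalOrderTerm 1 n v (p, a)
      = ∑ᶠ p, S.γ p (∑ᶠ a,
          (S.normalOrder 0 a (n - p + 1 - a) v - S.normalOrder 1 a (n - p + 1 - a) v)) := by
  obtain ⟨N, hN, hv⟩ := S.exists_killed v
  rw [← finsum_sub_distrib
    (hasFiniteSupport_finsum_snd (hv.hasFiniteSupport_γNormalOrderTerm hN 0 n))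
    (hasFiniteSupport_finsum_snd (hv.hasFiniteSupport_γNormalOrderTerm hN 1 n))]
  refine finsum_congr fun p => ?_
  rw [finsum_sub_distrib (hv.hasFiniteSupport_normalOrder hN 0 _)
    (hv.hasFiniteSupport_normalOrder hN 1 _), map_sub,
    map_finsum _ (hv.hasFiniteSupport_normalOrder hN 0 _),
    map_finsum _ (hv.hasFiniteSupport_normalOrder hN 1 _)]
  rfl

lemma finsum_finsum_γγψbψTerm (n : ℤ) (v : M) :
    ∑ᶠ (x) (a), S.γγψbψTerm n v (x, a)
      = ∑ᶠ pq : ℤ × ℤ, S.γ pq.1 (S.γ pq.2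
          (∑ᶠ a, S.ψb 0 a (S.ψ 1 (n - pq.1 - pq.2 + 1 - a) v))) := by
  obtain ⟨N, -, hv⟩ := S.exists_killed v
  exact finsum_congr fun x => (map_finsum (S.γ x.1 * S.γ x.2)
    (hv.hasFiniteSupport_ψb_ψ_of_ne (i := 1) (j := 0) (by decide) (n - x.1 - x.2 + 1))).symm

lemma finsum_χ_χb_apply (n : ℤ) (v : M) :
    ∑ᶠ r, S.χ r (S.χb (n + 1 - r) v)
      = ∑ᶠ pq : ℤ × ℤ, S.γ pq.1 (S.γ pq.2
            (∑ᶠ a, S.ψb 0 a (S.ψ 1 (n - pq.1 - pq.2 + 1 - a) v)))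
        - ∑ᶠ p, S.γ p (∑ᶠ a,
            (S.normalOrder 0 a (n - p + 1 - a) v - S.normalOrder 1 a (n - p + 1 - a) v))
        - ∑ᶠ a, S.ψb 1 a (S.ψ 0 (n + 1 - a) v) + (n : ℂ) • S.γ n v := by
  rw [finsum_χ_χb_apply_eq_finsum_terms, finsum_ψb_ψ_reflect, finsum_finsum_γγψbψTerm,
    ← finsum_finsum_γNormalOrderTerm_sub]
  abel

end Modes

lemma eq_zero_of_add_self_eq_zero {A : Type*} [AddCommGroup A] [Module ℂ A] {x : A}
    (h : x + x = 0) : x = 0 := by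
  rw [← two_smul ℂ] at h
  exact (smul_eq_zero.mp h).resolve_left two_ne_zero

end WakimotoFermion

end

/-- in the tensor product of the Wakimoto module with the fermionic Fock
space, the field `ρ = γ²K⁺ − 2γK⁰ − K⁻ − ∂γ` factorizes as `ρ(z) = χ(z)·χ̄(z)` with
`χ = ψ¹ − γψ²`, `χ̄ = ψ̄² + γψ̄¹`, and all modes of `χ` and `χ̄` pairwise anticommute
(in particular `χ_k² = χ̄_k² = 0`).

Conventions: fermionic and `χ` modes are indexed by `r : ℤ` standing for the
half-integer mode `r − 1/2`; `γ(z) = ∑ γ_n z^{−n}`, so `(∂γ)_n = −n·γ_n` and the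
mode-`n` coefficient of a weight-one field pairs indices by `r + s = n + 1`. -/
theorem stmt18 (M : Type*) [AddCommGroup M] [Module ℂ M]
    (ψ ψb : Fin 2 → ℤ → Module.End ℂ M)
    (hCAR : ∀ (i j : Fin 2) (r s : ℤ),
      ψ i r * ψb j s + ψb j s * ψ i r = if i = j ∧ r + s = 1 then 1 else 0)
    (hψψ : ∀ (i j : Fin 2) (r s : ℤ), ψ i r * ψ j s + ψ j s * ψ i r = 0)
    (hψbψb : ∀ (i j : Fin 2) (r s : ℤ), ψb i r * ψb j s + ψb j s * ψb i r = 0)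
    (γ : ℤ → Module.End ℂ M)
    (hγγ : ∀ m n : ℤ, γ m * γ n = γ n * γ m)
    (hγψ : ∀ (m : ℤ) (i : Fin 2) (r : ℤ), γ m * ψ i r = ψ i r * γ m)
    (hγψb : ∀ (m : ℤ) (i : Fin 2) (r : ℤ), γ m * ψb i r = ψb i r * γ m)
    (hloc : ∀ v : M, ∃ N : ℤ, ∀ r : ℤ, N ≤ r →
      γ r v = 0 ∧ ∀ i : Fin 2, ψ i r v = 0 ∧ ψb i r v = 0)
    (Kp Km K0 : ℤ → Module.End ℂ M)
    (hKp : ∀ (n : ℤ) (v : M), Kp n v = ∑ᶠ r : ℤ, ψb 0 r (ψ 1 (n + 1 - r) v))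
    (hKm : ∀ (n : ℤ) (v : M), Km n v = ∑ᶠ r : ℤ, ψb 1 r (ψ 0 (n + 1 - r) v))
    (hK0 : ∀ (n : ℤ) (v : M), K0 n v = (1 / 2 : ℂ) • ∑ᶠ r : ℤ,
      ((if 1 ≤ n + 1 - r then ψb 0 r (ψ 0 (n + 1 - r) v)
          else -(ψ 0 (n + 1 - r) (ψb 0 r v)))
       - (if 1 ≤ n + 1 - r then ψb 1 r (ψ 1 (n + 1 - r) v)
          else -(ψ 1 (n + 1 - r) (ψb 1 r v)))))
    -- the modes of ρ = γ²K⁺ − 2γK⁰ − K⁻ − ∂γ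
    (ρ : ℤ → Module.End ℂ M)
    (hρ : ∀ (n : ℤ) (v : M), ρ n v =
      (∑ᶠ pq : ℤ × ℤ, γ pq.1 (γ pq.2 (Kp (n - pq.1 - pq.2) v)))
      - 2 • (∑ᶠ p : ℤ, γ p (K0 (n - p) v))
      - Km n v + (n : ℂ) • γ n v)
    -- the modes of χ = ψ¹ − γψ² and χ̄ = ψ̄² + γψ̄¹
    (χ χb : ℤ → Module.End ℂ M)
    (hχ : ∀ (r : ℤ) (v : M), χ r v = ψ 0 r v - ∑ᶠ m : ℤ, γ m (ψ 1 (r - m) v))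
    (hχb : ∀ (r : ℤ) (v : M), χb r v = ψb 1 r v + ∑ᶠ m : ℤ, γ m (ψb 0 (r - m) v)) :
    -- factorization ρ(z) = χ(z)·χ̄(z), in modes
    (∀ (n : ℤ) (v : M), ρ n v = ∑ᶠ r : ℤ, χ r (χb (n + 1 - r) v)) ∧
    -- all modes of χ, χ̄ pairwise anticommute
    (∀ r s : ℤ, χ r * χ s + χ s * χ r = 0) ∧
    (∀ r s : ℤ, χb r * χ s + χ s * χb r = 0) ∧
    (∀ r s : ℤ, χb r * χb s + χb s * χb r = 0) ∧
    -- in particular χ_k² = χ̄_k² = 0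
    (∀ r : ℤ, χ r * χ r = 0 ∧ χb r * χb r = 0) := by
  set S : WakimotoFermion.Modes M := ⟨ψ, ψb, γ, hCAR, hψψ, hψbψb, hγγ, hγψ, hγψb, hloc⟩
  obtain rfl : χ = S.χ := funext fun r => LinearMap.ext fun v => (hχ r v).trans rfl
  obtain rfl : χb = S.χb := funext fun r => LinearMap.ext fun v => (hχb r v).trans rfl
  refine ⟨fun n v => ?_, S.anticomm_χ_χ, S.anticomm_χb_χ, S.anticomm_χb_χb,
    fun r => ⟨WakimotoFermion.eq_zero_of_add_self_eq_zero (S.anticomm_χ_χ r r),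
      WakimotoFermion.eq_zero_of_add_self_eq_zero (S.anticomm_χb_χb r r)⟩⟩
  have hK0' : 2 • ∑ᶠ p, γ p (K0 (n - p) v) = ∑ᶠ p, S.γ p (∑ᶠ a,
      (S.normalOrder 0 a (n - p + 1 - a) v - S.normalOrder 1 a (n - p + 1 - a) v)) := by
    simp only [hK0, map_smul, ← smul_finsum, S.normalOrder_apply]
    rw [← Nat.cast_smul_eq_nsmul ℂ, smul_smul]
    norm_num
    rfl
  rw [hρ, S.finsum_χ_χb_apply, hKm, hK0']
  simp only [hKp]
  rfl
end
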